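/- Let 𝔤 be a Lie algebra, 𝔭 an ideal, φ : 𝔭 → ℂ a Lie algebra homomorphism, and suppose φ' : 𝔤^φ → ℂ is a Lie algebra homomorphism extending φ. Let V(φ') = U(𝔤) ⊗_{U(𝔤^φ)} ℂv_{φ'} be the module induced from the one-dimensional 𝔤^φ-module given by φ'. Given two such extensions φ', φ'' of φ, the 𝔤-modules V(φ') and V(φ'') are isomorphic if and only if φ' = φ''. -/

import Mathlib

open UniversalEnvelopingAlgebra

noncomputable section Stmt17Aux

namespace Stmt17

open MvPolynomial

set_option linter.unusedSectionVars false

variable {L : Type*} [LieRing L] [LieAlgebra ℂ L]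
variable {ι : Type*} [LinearOrder ι]

attribute [local instance 100] LieRing.ofAssociativeRing

/-- bracket on the right as a linear map -/
def brk (y : L) : L →ₗ[ℂ] L where
  toFun x := ⁅x, y⁆
  map_add' a b := add_lie a b y
  map_smul' c a := smul_lie c a y

-- degree lemmas
lemma deg_add (f g : ι →₀ ℕ) : (f + g).degree = f.degree + g.degree := by
  have h := DFunLike.congr_fun Finsupp.degree_eq_weight_one (f + g)
  have hf := DFunLike.congr_fun Finsupp.degree_eq_weight_one f
  have hg := DFunLike.congr_fun Finsupp.degree_eq_weight_one g
  rw [h, hf, hg, map_add]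

lemma deg_single (k : ι) (n : ℕ) : (Finsupp.single k n).degree = n := by
  have h := DFunLike.congr_fun Finsupp.degree_eq_weight_one (Finsupp.single k n)
  rw [h]
  simp [Finsupp.weight_apply, Finsupp.sum_single_index]

section M

abbrev MM (ι : Type*) : Type _ := MvPolynomial ι ℂ

/-- monomial with coefficient one -/
def zm (ν : ι →₀ ℕ) : MM ι := MvPolynomial.monomial ν 1

lemma zm_mul (ν τ : ι →₀ ℕ) : zm ν * zm τ = zm (ν + τ) := by
  simp [zm, MvPolynomial.monomial_mul]

/-- the filtration subspace of polynomials of degree at most `d` -/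
def Fil (d : ℕ) : Submodule ℂ (MM ι) :=
  Submodule.span ℂ {p : MM ι | ∃ τ : ι →₀ ℕ, τ.degree ≤ d ∧ p = zm τ}

lemma zm_mem_Fil {τ : ι →₀ ℕ} {d : ℕ} (h : τ.degree ≤ d) : zm τ ∈ (Fil d : Submodule ℂ (MM ι)) :=
  Submodule.subset_span ⟨τ, h, rfl⟩

lemma Fil_mono {d e : ℕ} (h : d ≤ e) : (Fil d : Submodule ℂ (MM ι)) ≤ Fil e := by
  apply Submodule.span_le.2
  rintro p ⟨τ, hτ, rfl⟩
  exact zm_mem_Fil (le_trans hτ h)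

lemma top_le_Fil_span : (⊤ : Submodule ℂ (MM ι)) = Submodule.span ℂ (Set.range (zm (ι := ι))) := by
  have := (MvPolynomial.basisMonomials ι ℂ).span_eq
  rw [← this]
  congr 1

/-- every polynomial lies in some filtration level -/
lemma exists_mem_Fil (p : MM ι) : ∃ d, p ∈ (Fil d : Submodule ℂ (MM ι)) := by
  have hp : p ∈ (⊤ : Submodule ℂ (MM ι)) := trivial
  rw [top_le_Fil_span] at hp
  induction hp using Submodule.span_induction with
  | mem x hx =>
    obtain ⟨τ, rfl⟩ := hx
    exact ⟨τ.degree, zm_mem_Fil le_rfl⟩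
  | zero => exact ⟨0, Submodule.zero_mem _⟩
  | add x y _ _ hx hy =>
    obtain ⟨d, hd⟩ := hx; obtain ⟨e, he⟩ := hy
    exact ⟨max d e, Submodule.add_mem _ (Fil_mono (le_max_left d e) hd)
      (Fil_mono (le_max_right d e) he)⟩
  | smul c x _ hx =>
    obtain ⟨d, hd⟩ := hx
    exact ⟨d, Submodule.smul_mem _ c hd⟩

lemma mul_Fil_mem {d e : ℕ} {p q : MM ι} (hp : p ∈ (Fil d : Submodule ℂ (MM ι)))
    (hq : q ∈ (Fil e : Submodule ℂ (MM ι))) : p * q ∈ (Fil (d + e) : Submodule ℂ (MM ι)) := by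
  induction hp using Submodule.span_induction with
  | mem x hx =>
    obtain ⟨τ, hτ, rfl⟩ := hx
    induction hq using Submodule.span_induction with
    | mem y hy =>
      obtain ⟨σ, hσ, rfl⟩ := hy
      rw [zm_mul]
      exact zm_mem_Fil (by rw [deg_add]; omega)
    | zero => rw [mul_zero]; exact Submodule.zero_mem _
    | add a b _ _ ha hb => rw [mul_add]; exact Submodule.add_mem _ ha hb
    | smul c a _ ha => rw [mul_smul_comm]; exact Submodule.smul_mem _ c ha
  | zero => rw [zero_mul]; exact Submodule.zero_mem _
  | add a b _ _ ha hb => rw [add_mul]; exact Submodule.add_mem _ ha hb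
  | smul c a _ ha => rw [smul_mul_assoc]; exact Submodule.smul_mem _ c ha

/-- apply a family of operators monomial-wise -/
def ap (F : (ι →₀ ℕ) → (L →ₗ[ℂ] MM ι)) (x : L) : MM ι →ₗ[ℂ] MM ι :=
  (Finsupp.linearCombination ℂ (fun τ => F τ x)) ∘ₗ
    (MvPolynomial.basisMonomials ι ℂ).repr.toLinearMap

lemma ap_zm (F : (ι →₀ ℕ) → (L →ₗ[ℂ] MM ι)) (x : L) (τ : ι →₀ ℕ) :
    ap F x (zm τ) = F τ x := by
  have hb : (MvPolynomial.basisMonomials ι ℂ).repr (zm τ) = Finsupp.single τ 1 := by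
    rw [show (zm τ : MM ι) = (MvPolynomial.basisMonomials ι ℂ) τ from by
      rw [MvPolynomial.coe_basisMonomials]; rfl, Module.Basis.repr_self]
  simp [ap, hb]

/-- truncation: keep only monomials of degree at most `d` -/
def truncLM (d : ℕ) : MM ι →ₗ[ℂ] MM ι :=
  (Finsupp.linearCombination ℂ (fun τ : ι →₀ ℕ => if τ.degree ≤ d then (zm τ : MM ι) else 0)) ∘ₗ
    (MvPolynomial.basisMonomials ι ℂ).repr.toLinearMap

lemma truncLM_zm (d : ℕ) (τ : ι →₀ ℕ) :
    truncLM d (zm τ : MM ι) = if τ.degree ≤ d then (zm τ : MM ι) else 0 := by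
  have hb : (MvPolynomial.basisMonomials ι ℂ).repr (zm τ) = Finsupp.single τ 1 := by
    rw [show (zm τ : MM ι) = (MvPolynomial.basisMonomials ι ℂ) τ from by
      rw [MvPolynomial.coe_basisMonomials]; rfl, Module.Basis.repr_self]
  simp only [truncLM, LinearMap.coe_comp, Function.comp_apply, LinearEquiv.coe_coe, hb]
  rw [Finsupp.linearCombination_single, one_smul]

lemma truncLM_mem_Fil (d : ℕ) (p : MM ι) : truncLM d p ∈ (Fil d : Submodule ℂ (MM ι)) := by
  have hp : p ∈ (⊤ : Submodule ℂ (MM ι)) := trivial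
  rw [top_le_Fil_span] at hp
  induction hp using Submodule.span_induction with
  | mem x hx =>
    obtain ⟨τ, rfl⟩ := hx
    rw [truncLM_zm]
    split
    · exact zm_mem_Fil ‹_›
    · exact Submodule.zero_mem _
  | zero => rw [map_zero]; exact Submodule.zero_mem _
  | add a b _ _ ha hb => rw [map_add]; exact Submodule.add_mem _ ha hb
  | smul c a _ ha => rw [map_smul]; exact Submodule.smul_mem _ c ha

lemma truncLM_eq_self {d : ℕ} {p : MM ι} (hp : p ∈ (Fil d : Submodule ℂ (MM ι))) :
    truncLM d p = p := by
  induction hp using Submodule.span_induction with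
  | mem x hx =>
    obtain ⟨τ, hτ, rfl⟩ := hx
    rw [truncLM_zm, if_pos hτ]
  | zero => rw [map_zero]
  | add a b _ _ ha hb => rw [map_add, ha, hb]
  | smul c a _ ha => rw [map_smul, ha]

lemma ap_congr_Fil {F F' : (ι →₀ ℕ) → (L →ₗ[ℂ] MM ι)} {x : L} {d : ℕ}
    (h : ∀ τ : ι →₀ ℕ, τ.degree ≤ d → F τ = F' τ) {p : MM ι}
    (hp : p ∈ (Fil d : Submodule ℂ (MM ι))) : ap F x p = ap F' x p := by
  induction hp using Submodule.span_induction with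
  | mem q hq =>
    obtain ⟨τ, hτ, rfl⟩ := hq
    rw [ap_zm, ap_zm, h τ hτ]
  | zero => rw [map_zero, map_zero]
  | add a b _ _ ha hb => rw [map_add, map_add, ha, hb]
  | smul c a _ ha => rw [map_smul, map_smul, ha]

lemma ap_add_left (F : (ι →₀ ℕ) → (L →ₗ[ℂ] MM ι)) (x y : L) (p : MM ι) :
    ap F (x + y) p = ap F x p + ap F y p := by
  simp only [ap, LinearMap.coe_comp, Function.comp_apply, LinearEquiv.coe_coe]
  rw [Finsupp.linearCombination_apply, Finsupp.linearCombination_apply,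
    Finsupp.linearCombination_apply]
  rw [← Finsupp.sum_add]
  congr 1
  ext τ c
  rw [map_add, smul_add]

lemma ap_smul_left (F : (ι →₀ ℕ) → (L →ₗ[ℂ] MM ι)) (c : ℂ) (x : L) (p : MM ι) :
    ap F (c • x) p = c • ap F x p := by
  simp only [ap, LinearMap.coe_comp, Function.comp_apply, LinearEquiv.coe_coe]
  rw [Finsupp.linearCombination_apply, Finsupp.linearCombination_apply, Finsupp.smul_sum]
  congr 1
  ext τ a
  rw [map_smul, smul_comm]

lemma ap_mem_Fil {F : (ι →₀ ℕ) → (L →ₗ[ℂ] MM ι)} {x : L} {d e : ℕ}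
    (hF : ∀ τ : ι →₀ ℕ, τ.degree ≤ d → F τ x ∈ (Fil (τ.degree + e) : Submodule ℂ (MM ι)))
    {p : MM ι} (hp : p ∈ (Fil d : Submodule ℂ (MM ι))) :
    ap F x p ∈ (Fil (d + e) : Submodule ℂ (MM ι)) := by
  induction hp using Submodule.span_induction with
  | mem q hq =>
    obtain ⟨τ, hτ, rfl⟩ := hq
    rw [ap_zm]
    exact Fil_mono (by omega) (hF τ hτ)
  | zero => rw [map_zero]; exact Submodule.zero_mem _
  | add a b _ _ ha hb => rw [map_add]; exact Submodule.add_mem _ ha hb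
  | smul c a _ ha => rw [map_smul]; exact Submodule.smul_mem _ c ha

end M


section Construction

/-- bundled context for the relative PBW construction -/
structure Ctx (L : Type*) (ι : Type*) [LieRing L] [LieAlgebra ℂ L] [LinearOrder ι] where
  H : Submodule ℂ L
  C : Submodule ℂ L
  hHC : IsCompl H C
  b : Module.Basis ι ℂ C
  chi : L →ₗ[ℂ] ℂ
  hsub : ∀ x ∈ H, ∀ y ∈ H, ⁅x, y⁆ ∈ H
  chiC : ∀ c ∈ C, chi c = 0
  chiBr : ∀ x ∈ H, ∀ y ∈ H, chi ⁅x, y⁆ = 0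

variable (K : Ctx L ι)

/-- projection onto `C` along `H` -/
def piC : L →ₗ[ℂ] K.C := K.C.projectionOnto K.H K.hHC.symm

/-- the image of a basis vector of `C` in `L` -/
def ek (i : ι) : L := (K.b i : L)

/-- the linear map sending `x` to the degree-one polynomial given by the
coordinates of the `C`-component of `x` -/
def xi : L →ₗ[ℂ] MM ι :=
  (Finsupp.linearCombination ℂ (fun i => (X i : MM ι))) ∘ₗ
    ((K.b.repr : K.C ≃ₗ[ℂ] (ι →₀ ℂ)) : K.C →ₗ[ℂ] (ι →₀ ℂ)) ∘ₗ piC K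

/-- the part of (the `C`-component of) `x` supported on basis indices `≤ k` -/
def lo (k : ι) : L →ₗ[ℂ] L :=
  (Finsupp.linearCombination ℂ (fun i => if i ≤ k then ek K i else 0)) ∘ₗ
    ((K.b.repr : K.C ≃ₗ[ℂ] (ι →₀ ℂ)) : K.C →ₗ[ℂ] (ι →₀ ℂ)) ∘ₗ piC K

def hi (k : ι) : L →ₗ[ℂ] L := LinearMap.id - lo K k

lemma piC_mem_H {x : L} (hx : x ∈ K.H) : piC K x = 0 :=
  Submodule.projectionOnto_apply_of_mem_right K.hHC.symm hx

lemma piC_ek (i : ι) : piC K (ek K i) = K.b i :=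
  Submodule.projectionOnto_apply_left K.hHC.symm (K.b i)

lemma xi_mem_H {x : L} (hx : x ∈ K.H) : xi K x = 0 := by
  simp [xi, piC_mem_H K hx]

lemma zm_X (i : ι) : (X i : MM ι) = zm (Finsupp.single i 1) := rfl

lemma xi_ek (i : ι) : xi K (ek K i) = (X i : MM ι) := by
  simp only [xi, LinearMap.coe_comp, Function.comp_apply, LinearEquiv.coe_coe, piC_ek K i,
    Module.Basis.repr_self]
  rw [Finsupp.linearCombination_single, one_smul]

lemma lo_mem_H {k : ι} {x : L} (hx : x ∈ K.H) : lo K k x = 0 := by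
  simp [lo, piC_mem_H K hx]

lemma hi_mem_H {k : ι} {x : L} (hx : x ∈ K.H) : hi K k x = x := by
  simp [hi, lo_mem_H K hx]

lemma lo_ek (k i : ι) : lo K k (ek K i) = if i ≤ k then ek K i else 0 := by
  simp only [lo, LinearMap.coe_comp, Function.comp_apply, LinearEquiv.coe_coe, piC_ek K i,
    Module.Basis.repr_self]
  rw [Finsupp.linearCombination_single, one_smul]

lemma hi_ek_of_le {k i : ι} (h : i ≤ k) : hi K k (ek K i) = 0 := by
  simp [hi, lo_ek, if_pos h]

lemma hi_ek_of_gt {k i : ι} (h : ¬ i ≤ k) : hi K k (ek K i) = ek K i := by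
  simp [hi, lo_ek, if_neg h]

/-- multiplication by the monomial `zm ν` as a linear map -/
def mulZ (ν : ι →₀ ℕ) : MM ι →ₗ[ℂ] MM ι := LinearMap.mulRight ℂ (zm ν)

lemma mulZ_apply (ν : ι →₀ ℕ) (p : MM ι) : mulZ ν p = p * zm ν := rfl

/-- the base of the recursion : action on the constant polynomial 1 -/
def Gbase : L →ₗ[ℂ] MM ι :=
  (LinearMap.toSpanSingleton ℂ (MM ι) 1) ∘ₗ K.chi + xi K

lemma Gbase_apply (x : L) : Gbase K x = K.chi x • 1 + xi K x := rfl

lemma supp_ne {n : ℕ} {ν : ι →₀ ℕ} (hν : ¬ ν.degree ≤ n) : ν.support.Nonempty := by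
  rw [Finsupp.support_nonempty_iff]
  intro h
  rw [h, map_zero] at hν
  omega

/-- the recursive construction of the action, level by level -/
def Gn : ℕ → (ι →₀ ℕ) → (L →ₗ[ℂ] MM ι)
  | 0, _ => Gbase K
  | (n+1), ν =>
    if hν : ν.degree ≤ n then Gn n ν
    else
      mulZ ν ∘ₗ xi K
        + (ap (Gn n) (ek K (ν.support.min' (supp_ne hν)))) ∘ₗ truncLM n ∘ₗ
            (Gn n (ν - Finsupp.single (ν.support.min' (supp_ne hν)) 1)
              - mulZ (ν - Finsupp.single (ν.support.min' (supp_ne hν)) 1) ∘ₗ xi K)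
        + (Gn n (ν - Finsupp.single (ν.support.min' (supp_ne hν)) 1)) ∘ₗ
            (brk (ek K (ν.support.min' (supp_ne hν)))) ∘ₗ hi K (ν.support.min' (supp_ne hν))

/-- the action of `x ∈ L` on monomials -/
def Gd (ν : ι →₀ ℕ) : L →ₗ[ℂ] MM ι := Gn K ν.degree ν

lemma Gd_zero : Gd K 0 = Gbase K := by
  rw [Gd, map_zero]
  rfl

-- decomposition of a nonzero monomial
lemma nu_decomp {ν : ι →₀ ℕ} {k : ι} (hk : k ∈ ν.support) :
    Finsupp.single k 1 + (ν - Finsupp.single k 1) = ν := by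
  ext l
  rw [Finsupp.add_apply, Finsupp.tsub_apply]
  by_cases h : k = l
  · subst h
    rw [Finsupp.single_eq_same]
    rw [Finsupp.mem_support_iff] at hk
    omega
  · rw [Finsupp.single_eq_of_ne' h]
    omega

lemma nu_decomp_degree {ν : ι →₀ ℕ} {k : ι} (hk : k ∈ ν.support) :
    (ν - Finsupp.single k 1).degree + 1 = ν.degree := by
  conv_rhs => rw [← nu_decomp hk]
  rw [deg_add, deg_single]
  omega

lemma Gn_succ_eq (n : ℕ) (ν : ι →₀ ℕ) (h : ν.degree ≤ n) :
    Gn K (n+1) ν = Gn K n ν := by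
  rw [Gn, dif_pos h]

lemma Gn_eq_Gd (n : ℕ) (ν : ι →₀ ℕ) (h : ν.degree ≤ n) :
    Gn K n ν = Gd K ν := by
  induction n with
  | zero =>
    have h0 : ν.degree = 0 := by omega
    rw [Gd, h0]
  | succ n ih =>
    by_cases h' : ν.degree ≤ n
    · rw [Gn_succ_eq K n ν h', ih h']
    · have h1 : ν.degree = n + 1 := by omega
      rw [Gd, h1]

lemma Gn_unfold (n : ℕ) (ν : ι →₀ ℕ) (h : ν.degree = n + 1) (hne : ν.support.Nonempty) :
    Gn K (n+1) ν =
      mulZ ν ∘ₗ xi K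
        + (ap (Gn K n) (ek K (ν.support.min' hne))) ∘ₗ truncLM n ∘ₗ
            (Gn K n (ν - Finsupp.single (ν.support.min' hne) 1)
              - mulZ (ν - Finsupp.single (ν.support.min' hne) 1) ∘ₗ xi K)
        + (Gn K n (ν - Finsupp.single (ν.support.min' hne) 1)) ∘ₗ
            (brk (ek K (ν.support.min' hne))) ∘ₗ hi K (ν.support.min' hne) := by
  rw [Gn, dif_neg (by omega : ¬ ν.degree ≤ n)]

/-- the unfolding equation for `Gd` at a nonzero monomial -/
lemma Gd_unfold (ν : ι →₀ ℕ) (hne : ν.support.Nonempty) :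
    Gd K ν =
      mulZ ν ∘ₗ xi K
        + (ap (Gd K) (ek K (ν.support.min' hne))) ∘ₗ
            truncLM ((ν - Finsupp.single (ν.support.min' hne) 1).degree) ∘ₗ
            (Gd K (ν - Finsupp.single (ν.support.min' hne) 1)
              - mulZ (ν - Finsupp.single (ν.support.min' hne) 1) ∘ₗ xi K)
        + (Gd K (ν - Finsupp.single (ν.support.min' hne) 1)) ∘ₗ
            (brk (ek K (ν.support.min' hne))) ∘ₗ hi K (ν.support.min' hne) := by
  set k := ν.support.min' hne with hk
  set ν' := ν - Finsupp.single k 1 with hν'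
  have hdeg : ν'.degree + 1 = ν.degree := nu_decomp_degree (ν.support.min'_mem hne)
  rw [Gd, show ν.degree = ν'.degree + 1 from hdeg.symm,
    Gn_unfold K ν'.degree ν hdeg.symm hne]
  rw [← hν', Gn_eq_Gd K _ _ le_rfl]
  congr 2
  ext x : 1
  simp only [LinearMap.coe_comp, Function.comp_apply]
  exact ap_congr_Fil (fun τ hτ => Gn_eq_Gd K _ _ hτ) (truncLM_mem_Fil _ _)


lemma zm_zero : (zm 0 : MM ι) = 1 := by
  simp [zm]

lemma X_mul_zm (i : ι) (ν : ι →₀ ℕ) : (X i : MM ι) * zm ν = zm (Finsupp.single i 1 + ν) := by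
  rw [zm_X, zm_mul]

lemma chi_ek (i : ι) : K.chi (ek K i) = 0 := K.chiC _ (K.b i).2

lemma xi_mem_Fil (x : L) : xi K x ∈ (Fil 1 : Submodule ℂ (MM ι)) := by
  rw [xi]
  simp only [LinearMap.coe_comp, Function.comp_apply, LinearEquiv.coe_coe]
  rw [Finsupp.linearCombination_apply]
  apply Submodule.finsuppSum_mem
  intro i _
  apply Submodule.smul_mem
  rw [zm_X]
  exact zm_mem_Fil (by rw [deg_single])

/-- the operator given by the action of `x` -/
def op (x : L) : MM ι →ₗ[ℂ] MM ι := ap (Gd K) x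

lemma op_zm (x : L) (ν : ι →₀ ℕ) : op K x (zm ν) = Gd K ν x := ap_zm _ _ _

/-- Lemma A : on monomials all whose indices are `≥ i`, the basis vector `e i` acts by
multiplication by `X i`. -/
lemma Gd_ek_le : ∀ (n : ℕ) (ν : ι →₀ ℕ), ν.degree ≤ n → ∀ i : ι, (∀ l ∈ ν.support, i ≤ l) →
    Gd K ν (ek K i) = X i * zm ν := by
  intro n
  induction n with
  | zero =>
    intro ν hν i _
    have h0 : ν = 0 := by
      rw [← Finsupp.degree_eq_zero_iff]
      omega
    subst h0
    rw [Gd_zero, Gbase_apply, chi_ek, zero_smul, zero_add, xi_ek, zm_zero, mul_one]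
  | succ n ih =>
    intro ν hν i hle
    by_cases h' : ν.degree ≤ n
    · exact ih ν h' i hle
    · have hne : ν.support.Nonempty := supp_ne h'
      set k := ν.support.min' hne with hk
      set ν' := ν - Finsupp.single k 1 with hν'
      have hik : i ≤ k := hle _ (ν.support.min'_mem hne)
      have hsupp' : ∀ l ∈ ν'.support, i ≤ l := fun l hl =>
        hle _ (Finsupp.support_tsub hl)
      have hdeg' : ν'.degree + 1 = ν.degree := nu_decomp_degree (ν.support.min'_mem hne)
      rw [Gd_unfold K ν hne]
      simp only [LinearMap.add_apply, LinearMap.coe_comp, Function.comp_apply, ← hk, ← hν',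
        LinearMap.sub_apply]
      rw [hi_ek_of_le K hik, map_zero, map_zero, add_zero]
      rw [xi_ek, ih ν' (by omega) i hsupp', mulZ_apply, mulZ_apply, sub_self, map_zero,
        map_zero, add_zero]

/-- Lemma B : the action of `x` on a monomial is `xi x` times the monomial, modulo
lower-degree terms. -/
lemma Gd_sub_mem : ∀ (n : ℕ) (ν : ι →₀ ℕ), ν.degree ≤ n → ∀ x : L,
    Gd K ν x - xi K x * zm ν ∈ (Fil ν.degree : Submodule ℂ (MM ι)) := by
  intro n
  induction n with
  | zero =>
    intro ν hν x
    have h0 : ν = 0 := by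
      rw [← Finsupp.degree_eq_zero_iff]
      omega
    subst h0
    rw [Gd_zero, Gbase_apply, zm_zero, mul_one, map_zero]
    have : K.chi x • (1 : MM ι) + xi K x - xi K x = K.chi x • 1 := by ring
    rw [this]
    exact Submodule.smul_mem _ _ (by rw [← zm_zero]; exact zm_mem_Fil (le_refl 0))
  | succ n ih =>
    intro ν hν x
    by_cases h' : ν.degree ≤ n
    · exact ih ν h' x
    · have hne : ν.support.Nonempty := supp_ne h'
      set k := ν.support.min' hne with hk
      set ν' := ν - Finsupp.single k 1 with hν'
      have hdeg' : ν'.degree + 1 = ν.degree := nu_decomp_degree (ν.support.min'_mem hne)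
      rw [Gd_unfold K ν hne]
      simp only [LinearMap.add_apply, LinearMap.coe_comp, Function.comp_apply, ← hk, ← hν',
        LinearMap.sub_apply]
      rw [mulZ_apply, mulZ_apply]
      have hw : Gd K ν' x - xi K x * zm ν' ∈ (Fil ν'.degree : Submodule ℂ (MM ι)) :=
        ih ν' (by omega) x
      rw [truncLM_eq_self hw]
      have happ : ap (Gd K) (ek K k) (Gd K ν' x - xi K x * zm ν')
          ∈ (Fil (ν'.degree + 1) : Submodule ℂ (MM ι)) := by
        apply ap_mem_Fil (e := 1) _ hw
        intro τ hτ
        have h1 : Gd K τ (ek K k) - xi K (ek K k) * zm τ ∈ (Fil τ.degree : Submodule ℂ (MM ι)) :=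
          ih τ (by omega) (ek K k)
        have h2 : xi K (ek K k) * zm τ ∈ (Fil (τ.degree + 1) : Submodule ℂ (MM ι)) := by
          rw [xi_ek, X_mul_zm]
          exact zm_mem_Fil (by rw [deg_add, deg_single]; omega)
        have := Submodule.add_mem _ (Fil_mono (Nat.le_succ _) h1) h2
        simpa using this
      have hbr : Gd K ν' (brk (ek K k) (hi K k x)) ∈ (Fil (ν'.degree + 1) : Submodule ℂ (MM ι)) := by
        have h1 := ih ν' (by omega) (brk (ek K k) (hi K k x))
        have h2 : xi K (brk (ek K k) (hi K k x)) * zm ν'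
            ∈ (Fil (1 + ν'.degree) : Submodule ℂ (MM ι)) :=
          mul_Fil_mem (xi_mem_Fil K _) (zm_mem_Fil le_rfl)
        have := Submodule.add_mem _ (Fil_mono (Nat.le_succ _) h1)
          (Fil_mono (by omega) h2)
        simpa using this
      have : xi K x * zm ν + ap (Gd K) (ek K k) (Gd K ν' x - xi K x * zm ν')
          + Gd K ν' (brk (ek K k) (hi K k x)) - xi K x * zm ν
          = ap (Gd K) (ek K k) (Gd K ν' x - xi K x * zm ν')
            + Gd K ν' (brk (ek K k) (hi K k x)) := by ring
      rw [this, ← hdeg']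
      exact Submodule.add_mem _ happ hbr

lemma Gd_mem (ν : ι →₀ ℕ) (x : L) : Gd K ν x ∈ (Fil (ν.degree + 1) : Submodule ℂ (MM ι)) := by
  have h1 := Gd_sub_mem K ν.degree ν le_rfl x
  have h2 : xi K x * zm ν ∈ (Fil (1 + ν.degree) : Submodule ℂ (MM ι)) :=
    mul_Fil_mem (xi_mem_Fil K x) (zm_mem_Fil le_rfl)
  have := Submodule.add_mem _ (Fil_mono (Nat.le_succ _) h1) (Fil_mono (by omega) h2)
  simpa using this

lemma op_mem_Fil {d : ℕ} (x : L) {p : MM ι} (hp : p ∈ (Fil d : Submodule ℂ (MM ι))) :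
    op K x p ∈ (Fil (d+1) : Submodule ℂ (MM ι)) :=
  ap_mem_Fil (fun τ _ => Gd_mem K τ x) hp

/-- the applied version of the unfolding lemma, with truncation removed -/
lemma Gd_apply_unfold (ν : ι →₀ ℕ) (hne : ν.support.Nonempty) (x : L) :
    Gd K ν x = xi K x * zm ν
      + op K (ek K (ν.support.min' hne)) (Gd K (ν - Finsupp.single (ν.support.min' hne) 1) x)
      - op K (ek K (ν.support.min' hne)) (xi K x * zm (ν - Finsupp.single (ν.support.min' hne) 1))
      + Gd K (ν - Finsupp.single (ν.support.min' hne) 1)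
          (brk (ek K (ν.support.min' hne)) (hi K (ν.support.min' hne) x)) := by
  set k := ν.support.min' hne with hk
  set ν' := ν - Finsupp.single k 1 with hν'
  rw [Gd_unfold K ν hne]
  simp only [LinearMap.add_apply, LinearMap.coe_comp, Function.comp_apply, ← hk, ← hν',
    LinearMap.sub_apply]
  rw [mulZ_apply, mulZ_apply, truncLM_eq_self (Gd_sub_mem K ν'.degree ν' le_rfl x), map_sub]
  simp only [op]
  ring


section LieProp

/-- the commutator property at a point -/
def Dlt (x y : L) (p : MM ι) : Prop :=
  op K x (op K y p) - op K y (op K x p) = op K ⁅x, y⁆ p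

lemma op_add_left (x y : L) (p : MM ι) : op K (x + y) p = op K x p + op K y p :=
  ap_add_left _ _ _ _

lemma op_smul_left (c : ℂ) (x : L) (p : MM ι) : op K (c • x) p = c • op K x p :=
  ap_smul_left _ _ _ _

lemma op_zero_left (p : MM ι) : op K 0 p = 0 := by
  have := op_smul_left K 0 0 p
  simpa using this

lemma op_neg_left (x : L) (p : MM ι) : op K (-x) p = - op K x p := by
  have := op_smul_left K (-1) x p
  simpa using this

lemma Dlt_antisymm {x y : L} {p : MM ι} (h : Dlt K x y p) : Dlt K y x p := by
  rw [Dlt, ← lie_skew, op_neg_left]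
  rw [Dlt] at h
  rw [← h]
  ring

lemma Dlt_span_p {x y : L} {S : Set (MM ι)} (h : ∀ p ∈ S, Dlt K x y p) :
    ∀ p ∈ Submodule.span ℂ S, Dlt K x y p := by
  intro p hp
  induction hp using Submodule.span_induction with
  | mem q hq => exact h q hq
  | zero => simp [Dlt]
  | add a c _ _ ha hc =>
    rw [Dlt] at ha hc ⊢
    simp only [map_add]
    rw [← ha, ← hc]
    ring
  | smul t a _ ha =>
    rw [Dlt] at ha ⊢
    simp only [map_smul]
    rw [← ha]
    module

lemma Dlt_span_x {y : L} {p : MM ι} {S : Set L} (h : ∀ x ∈ S, Dlt K x y p) :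
    ∀ x ∈ Submodule.span ℂ S, Dlt K x y p := by
  intro x hx
  induction hx using Submodule.span_induction with
  | mem q hq => exact h q hq
  | zero => simp [Dlt, op_zero_left]
  | add a c _ _ ha hc =>
    rw [Dlt] at ha hc ⊢
    rw [add_lie, op_add_left, op_add_left, op_add_left]
    simp only [map_add]
    rw [← ha, ← hc]
    ring
  | smul t a _ ha =>
    rw [Dlt] at ha ⊢
    rw [smul_lie, op_smul_left, op_smul_left, op_smul_left]
    simp only [map_smul]
    rw [← ha]
    module

lemma Dlt_span_y {x : L} {p : MM ι} {S : Set L} (h : ∀ y ∈ S, Dlt K x y p) :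
    ∀ y ∈ Submodule.span ℂ S, Dlt K x y p := by
  intro y hy
  exact Dlt_antisymm K (Dlt_span_x K (fun z hz => Dlt_antisymm K (h z hz)) y hy)

/-- span of `e j` for `j ≥ i` together with `H` -/
def spanGe (i : ι) : Submodule ℂ L :=
  Submodule.span ℂ ({x | ∃ j, i ≤ j ∧ x = ek K j} ∪ (K.H : Set L))

/-- span of `e j` for `j > i` together with `H` -/
def spanGt (i : ι) : Submodule ℂ L :=
  Submodule.span ℂ ({x | ∃ j, i < j ∧ x = ek K j} ∪ (K.H : Set L))

lemma spanGt_le_spanGe (i : ι) : spanGt K i ≤ spanGe K i := by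
  apply Submodule.span_mono
  apply Set.union_subset_union_left
  rintro x ⟨j, hj, rfl⟩
  exact ⟨j, le_of_lt hj, rfl⟩

lemma H_le_spanGt (i : ι) : (K.H : Set L) ⊆ (spanGt K i : Set L) :=
  fun x hx => Submodule.subset_span (Set.mem_union_right _ hx)

lemma mem_top_span (x : L) :
    x ∈ Submodule.span ℂ ({x | ∃ j, x = ek K j} ∪ (K.H : Set L)) := by
  have hsup : K.H ⊔ K.C = ⊤ := K.hHC.sup_eq_top
  have hx : x ∈ K.H ⊔ K.C := by rw [hsup]; trivial
  rw [Submodule.mem_sup] at hx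
  obtain ⟨h, hh, c, hc, rfl⟩ := hx
  apply Submodule.add_mem
  · exact Submodule.subset_span (Set.mem_union_right _ hh)
  · have hC : K.C = Submodule.span ℂ (Set.range (fun j => ek K j)) := by
      have h1 := K.b.span_eq
      have h2 : Submodule.map K.C.subtype (Submodule.span ℂ (Set.range K.b)) =
          Submodule.span ℂ (K.C.subtype '' (Set.range K.b)) := Submodule.map_span _ _
      rw [h1] at h2
      rw [Submodule.map_subtype_top] at h2
      rw [h2]
      congr 1
      ext z
      constructor
      · rintro ⟨w, ⟨j, rfl⟩, rfl⟩
        exact ⟨j, rfl⟩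
      · rintro ⟨j, rfl⟩
        exact ⟨K.b j, ⟨j, rfl⟩, rfl⟩
    rw [hC] at hc
    refine Submodule.span_mono ?_ hc
    rintro z ⟨j, rfl⟩
    exact Set.mem_union_left _ ⟨j, rfl⟩

-- support of the sum with a single
lemma supp_single_add {i : ι} {T : ι →₀ ℕ} (hiT : ∀ l ∈ T.support, i ≤ l) :
    ∀ l ∈ (Finsupp.single i 1 + T).support, i ≤ l := by
  intro l hl
  have := Finsupp.support_add hl
  rw [Finset.mem_union] at this
  rcases this with h | h
  · rw [Finsupp.support_single_ne_zero i one_ne_zero] at h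
    simp at h
    rw [h]
  · exact hiT l h

lemma single_add_sub {i : ι} (T : ι →₀ ℕ) :
    (Finsupp.single i 1 + T) - Finsupp.single i 1 = T := by
  ext l
  rw [Finsupp.tsub_apply, Finsupp.add_apply]
  omega

lemma mem_single_add_support {i : ι} (T : ι →₀ ℕ) :
    i ∈ (Finsupp.single i 1 + T).support := by
  rw [Finsupp.mem_support_iff, Finsupp.add_apply, Finsupp.single_eq_same]
  omega

lemma min'_eq_of {ν : ι →₀ ℕ} (k : ι) (hne : ν.support.Nonempty)
    (hk : k ∈ ν.support) (hmin : ∀ l ∈ ν.support, k ≤ l) :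
    ν.support.min' hne = k :=
  le_antisymm (Finset.min'_le _ _ hk) (hmin _ (Finset.min'_mem _ _))

/-- Case I of the commutation relation : the second element is `e i` with `i`
below the monomial and the first element is in `spanGe i`. -/
lemma caseI (T : ι →₀ ℕ) (i : ι) (hiT : ∀ l ∈ T.support, i ≤ l) :
    ∀ x ∈ spanGe K i, Dlt K x (ek K i) (zm T) := by
  apply Dlt_span_x
  intro x hx
  have hop_eki : op K (ek K i) (zm T) = zm (Finsupp.single i 1 + T) := by
    rw [op_zm, Gd_ek_le K T.degree T le_rfl i hiT, X_mul_zm]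
  -- the unfolding of the action of x on zm (single i + T)
  set ν := Finsupp.single i 1 + T with hν
  have hne : ν.support.Nonempty := ⟨i, mem_single_add_support T⟩
  have hmin : ν.support.min' hne = i :=
    min'_eq_of i hne (mem_single_add_support T) (supp_single_add hiT)
  have hsub : ν - Finsupp.single i 1 = T := single_add_sub T
  have hunfold := Gd_apply_unfold K ν hne x
  rw [hmin, hsub] at hunfold
  rw [Dlt, hop_eki]
  simp only [op_zm]
  rw [hunfold]
  -- reduce to the residual identity
  have hres : xi K x * zm ν - op K (ek K i) (xi K x * zm T)
      = Gd K T ⁅lo K i x, ek K i⁆ → xi K x * zm ν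
        + op K (ek K i) (Gd K T x)
        - op K (ek K i) (xi K x * zm T)
        + Gd K T (brk (ek K i) (hi K i x))
        - op K (ek K i) (Gd K T x) = Gd K T ⁅x, ek K i⁆ := by
    intro h
    have hxsplit : (⁅x, ek K i⁆ : L) = ⁅lo K i x, ek K i⁆ + ⁅hi K i x, ek K i⁆ := by
      rw [← add_lie]
      congr 1
      simp [hi]
    rw [hxsplit, map_add]
    have : brk (ek K i) (hi K i x) = ⁅hi K i x, ek K i⁆ := rfl
    rw [this, ← h]
    ring
  apply hres
  -- now prove the residual identity for the generators
  rcases hx with ⟨j, hij, rfl⟩ | hxH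
  · -- x = ek j with i ≤ j
    rw [xi_ek, X_mul_zm, X_mul_zm]
    have h1 : op K (ek K i) (zm (Finsupp.single j 1 + T)) =
        zm (Finsupp.single i 1 + (Finsupp.single j 1 + T)) := by
      rw [op_zm, Gd_ek_le K _ _ le_rfl i, X_mul_zm]
      intro l hl
      have := Finsupp.support_add hl
      rw [Finset.mem_union] at this
      rcases this with h | h
      · rw [Finsupp.support_single_ne_zero j one_ne_zero] at h
        simp at h
        rw [h]
        exact hij
      · exact hiT l h
    rw [h1]
    have h2 : Finsupp.single j 1 + ν = Finsupp.single i 1 + (Finsupp.single j 1 + T) := by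
      rw [hν, add_left_comm]
    rw [h2, sub_self]
    rw [lo_ek]
    by_cases hji : j ≤ i
    · have : j = i := le_antisymm hji hij
      subst this
      rw [if_pos le_rfl, lie_self, map_zero]
    · rw [if_neg hji, zero_lie, map_zero]
  · -- x ∈ H
    rw [xi_mem_H K hxH, zero_mul, zero_mul, map_zero, sub_self, lo_mem_H K hxH,
      zero_lie, map_zero]


/-- base case : two elements of `H` acting on the constant monomial -/
lemma caseH0 : ∀ y ∈ K.H, ∀ y' ∈ K.H, Dlt K y y' (zm (0 : ι →₀ ℕ)) := by
  have h0 : ∀ z ∈ K.H, op K z (zm (0 : ι →₀ ℕ)) = K.chi z • zm 0 := by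
    intro z hz
    rw [op_zm, Gd_zero, Gbase_apply, xi_mem_H K hz, add_zero, zm_zero]
  intro y hy y' hy'
  rw [Dlt, h0 y' hy', h0 y hy, map_smul, map_smul, h0 y hy, h0 y' hy',
    h0 _ (K.hsub y hy y' hy'), K.chiBr y hy y' hy', zero_smul, smul_smul, smul_smul,
    mul_comm, sub_self]

/-- expansion of the action of a "high" element on `zm T` -/
lemma opT_eq (T : ι →₀ ℕ) (hne : T.support.Nonempty) :
    ∀ yy ∈ spanGt K (T.support.min' hne),
      op K yy (zm T)
        = op K (ek K (T.support.min' hne))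
            (op K yy (zm (T - Finsupp.single (T.support.min' hne) 1)))
          + op K ⁅yy, ek K (T.support.min' hne)⁆
              (zm (T - Finsupp.single (T.support.min' hne) 1)) := by
  set k := T.support.min' hne with hk
  set T' := T - Finsupp.single k 1 with hT'
  have hdecomp : Finsupp.single k 1 + T' = T := nu_decomp (T.support.min'_mem hne)
  have hminT' : ∀ l ∈ T'.support, k ≤ l := fun l hl =>
    Finset.min'_le _ _ (Finsupp.support_tsub hl)
  intro yy hyy
  induction hyy using Submodule.span_induction with
  | mem v hv =>
    rcases hv with ⟨j, hkj, rfl⟩ | hvH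
    · -- v = ek j with k < j
      have hunfold := Gd_apply_unfold K T hne (ek K j)
      rw [← hk, ← hT'] at hunfold
      rw [op_zm, hunfold, hi_ek_of_gt K (not_le_of_gt hkj), xi_ek]
      have hcancel : (X j : MM ι) * zm T
          = op K (ek K k) ((X j : MM ι) * zm T') := by
        rw [X_mul_zm, X_mul_zm, op_zm, Gd_ek_le K _ _ le_rfl k, X_mul_zm]
        · congr 1
          rw [← hdecomp, add_left_comm]
        · intro l hl
          have := Finsupp.support_add hl
          rw [Finset.mem_union] at this
          rcases this with h | h
          · rw [Finsupp.support_single_ne_zero j one_ne_zero] at h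
            simp at h
            rw [h]
            exact le_of_lt hkj
          · exact hminT' l h
      rw [hcancel]
      have hbrk : brk (ek K k) (ek K j) = ⁅ek K j, ek K k⁆ := rfl
      rw [hbrk]
      simp only [op_zm]
      ring
    · -- v ∈ H
      have hunfold := Gd_apply_unfold K T hne v
      rw [← hk, ← hT'] at hunfold
      rw [op_zm, hunfold, hi_mem_H K hvH, xi_mem_H K hvH, zero_mul, zero_mul, map_zero,
        sub_zero, zero_add]
      have hbrk : brk (ek K k) v = ⁅v, ek K k⁆ := rfl
      rw [hbrk]
      simp only [op_zm]
  | zero => simp [op_zero_left]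
  | add a c _ _ ha hc =>
    rw [op_add_left, ha, hc, add_lie]
    simp only [op_add_left, map_add]
    ring
  | smul t a _ ha =>
    rw [op_smul_left, ha, smul_lie]
    simp only [op_smul_left, map_smul]
    module

/-- the subspace containing all `op yy z'` for `yy` high -/
def PP (k : ι) (T' : ι →₀ ℕ) : Submodule ℂ (MM ι) :=
  Submodule.span ℂ ({p | ∃ j, k < j ∧ p = zm (Finsupp.single j 1 + T')}
    ∪ {p | ∃ τ : ι →₀ ℕ, τ.degree ≤ T'.degree ∧ p = zm τ})

lemma Fil_le_PP (k : ι) (T' : ι →₀ ℕ) : (Fil T'.degree : Submodule ℂ (MM ι)) ≤ PP k T' :=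
  Submodule.span_mono (fun p hp => Set.mem_union_right _ hp)

lemma opz_mem_PP (k : ι) (T' : ι →₀ ℕ) :
    ∀ yy ∈ spanGt K k, op K yy (zm T') ∈ PP k T' := by
  intro yy hyy
  induction hyy using Submodule.span_induction with
  | mem v hv =>
    rcases hv with ⟨j, hkj, rfl⟩ | hvH
    · rw [op_zm]
      have hsplit : Gd K T' (ek K j)
          = (Gd K T' (ek K j) - xi K (ek K j) * zm T') + xi K (ek K j) * zm T' := by ring
      rw [hsplit]
      apply Submodule.add_mem
      · exact Fil_le_PP k T' (Gd_sub_mem K T'.degree T' le_rfl _)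
      · rw [xi_ek, X_mul_zm]
        exact Submodule.subset_span (Set.mem_union_left _ ⟨j, hkj, rfl⟩)
    · rw [op_zm]
      have h1 := Gd_sub_mem K T'.degree T' le_rfl v
      rw [xi_mem_H K hvH, zero_mul, sub_zero] at h1
      exact Fil_le_PP k T' h1
  | zero => rw [op_zero_left]; exact Submodule.zero_mem _
  | add a c _ _ ha hc => rw [op_add_left]; exact Submodule.add_mem _ ha hc
  | smul t a _ ha => rw [op_smul_left]; exact Submodule.smul_mem _ t ha

/-- commutation of a "high" element with `e k` on the relevant subspace -/
lemma caseII_comm (T : ι →₀ ℕ) (hne : T.support.Nonempty)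
    (IH : ∀ τ : ι →₀ ℕ, τ.degree < T.degree → ∀ x y : L, Dlt K x y (zm τ)) :
    ∀ a ∈ spanGt K (T.support.min' hne),
      ∀ p ∈ PP (T.support.min' hne) (T - Finsupp.single (T.support.min' hne) 1),
        Dlt K a (ek K (T.support.min' hne)) p := by
  set k := T.support.min' hne with hk
  set T' := T - Finsupp.single k 1 with hT'
  have hminT' : ∀ l ∈ T'.support, k ≤ l := fun l hl =>
    Finset.min'_le _ _ (Finsupp.support_tsub hl)
  have hdegT' : T'.degree + 1 = T.degree := nu_decomp_degree (T.support.min'_mem hne)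
  intro a ha
  apply Dlt_span_p
  rintro p (⟨j, hkj, rfl⟩ | ⟨τ, hτ, rfl⟩)
  · -- p = zm (single j + T')
    apply caseI K (Finsupp.single j 1 + T') k _ a (spanGt_le_spanGe K k ha)
    intro l hl
    have := Finsupp.support_add hl
    rw [Finset.mem_union] at this
    rcases this with h | h
    · rw [Finsupp.support_single_ne_zero j one_ne_zero] at h
      simp at h
      rw [h]
      exact le_of_lt hkj
    · exact hminT' l h
  · -- p = zm τ with low degree
    exact IH τ (by omega) a (ek K k)

/-- Case II : both elements high with respect to the minimum of the support -/
lemma caseII (T : ι →₀ ℕ) (hne : T.support.Nonempty)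
    (IH : ∀ τ : ι →₀ ℕ, τ.degree < T.degree → ∀ x y : L, Dlt K x y (zm τ)) :
    ∀ x ∈ spanGt K (T.support.min' hne), ∀ y ∈ spanGt K (T.support.min' hne),
      Dlt K x y (zm T) := by
  set k := T.support.min' hne with hk
  set T' := T - Finsupp.single k 1 with hT'
  have hdegT' : T'.degree + 1 = T.degree := nu_decomp_degree (T.support.min'_mem hne)
  have hIH' : ∀ x y : L, Dlt K x y (zm T') := fun x y => IH T' (by omega) x y
  have hzT : zm T = op K (ek K k) (zm T') := by
    rw [op_zm, Gd_ek_le K T'.degree T' le_rfl k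
      (fun l hl => Finset.min'_le _ _ (Finsupp.support_tsub hl)), X_mul_zm,
      nu_decomp (T.support.min'_mem hne)]
  intro x hx y hy
  have h1y := opT_eq K T hne y hy
  have h1x := opT_eq K T hne x hx
  rw [← hk, ← hT'] at h1y h1x
  have hpy := opz_mem_PP K k T' y hy
  have hpx := opz_mem_PP K k T' x hx
  have e1 : op K x (op K (ek K k) (op K y (zm T')))
      = op K (ek K k) (op K x (op K y (zm T'))) + op K ⁅x, ek K k⁆ (op K y (zm T')) := by
    have h := caseII_comm K T hne IH x hx (op K y (zm T')) hpy
    rw [Dlt] at h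
    rw [← h]
    ring
  have e2 : op K y (op K (ek K k) (op K x (zm T')))
      = op K (ek K k) (op K y (op K x (zm T'))) + op K ⁅y, ek K k⁆ (op K x (zm T')) := by
    have h := caseII_comm K T hne IH y hy (op K x (zm T')) hpx
    rw [Dlt] at h
    rw [← h]
    ring
  have eA1 : op K (ek K k) (op K x (op K y (zm T'))) - op K (ek K k) (op K y (op K x (zm T')))
      = op K (ek K k) (op K ⁅x, y⁆ (zm T')) := by
    rw [← map_sub]
    congr 1
    exact hIH' x y
  have eA2 : op K ⁅x, ek K k⁆ (op K y (zm T')) - op K y (op K ⁅x, ek K k⁆ (zm T'))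
      = op K ⁅⁅x, ek K k⁆, y⁆ (zm T') := hIH' ⁅x, ek K k⁆ y
  have eA3 : op K x (op K ⁅y, ek K k⁆ (zm T')) - op K ⁅y, ek K k⁆ (op K x (zm T'))
      = op K ⁅x, ⁅y, ek K k⁆⁆ (zm T') := hIH' x ⁅y, ek K k⁆
  have eR : op K ⁅x, y⁆ (zm T)
      = op K (ek K k) (op K ⁅x, y⁆ (zm T')) + op K ⁅⁅x, y⁆, ek K k⁆ (zm T') := by
    rw [hzT]
    have h := hIH' ⁅x, y⁆ (ek K k)
    rw [Dlt] at h
    rw [← h]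
    ring
  have hjac : op K ⁅⁅x, ek K k⁆, y⁆ (zm T') + op K ⁅x, ⁅y, ek K k⁆⁆ (zm T')
      = op K ⁅⁅x, y⁆, ek K k⁆ (zm T') := by
    have hl : (⁅⁅x, ek K k⁆, y⁆ : L) + ⁅x, ⁅y, ek K k⁆⁆ = ⁅⁅x, y⁆, ek K k⁆ := by
      have h1 : (⁅⁅x, y⁆, ek K k⁆ : L) = ⁅x, ⁅y, ek K k⁆⁆ - ⁅y, ⁅x, ek K k⁆⁆ :=
        lie_lie _ _ _
      have h2 : (⁅⁅x, ek K k⁆, y⁆ : L) = -⁅y, ⁅x, ek K k⁆⁆ := (lie_skew _ _).symm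
      rw [h1, h2]
      abel
    rw [← op_add_left, hl]
  rw [Dlt, h1y, h1x, map_add, map_add, e1, e2, eR]
  calc op K (ek K k) (op K x (op K y (zm T'))) + op K ⁅x, ek K k⁆ (op K y (zm T'))
        + op K x (op K ⁅y, ek K k⁆ (zm T'))
      - (op K (ek K k) (op K y (op K x (zm T'))) + op K ⁅y, ek K k⁆ (op K x (zm T'))
        + op K y (op K ⁅x, ek K k⁆ (zm T')))
      = (op K (ek K k) (op K x (op K y (zm T'))) - op K (ek K k) (op K y (op K x (zm T'))))
        + (op K ⁅x, ek K k⁆ (op K y (zm T')) - op K y (op K ⁅x, ek K k⁆ (zm T')))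
        + (op K x (op K ⁅y, ek K k⁆ (zm T')) - op K ⁅y, ek K k⁆ (op K x (zm T'))) := by ring
    _ = op K (ek K k) (op K ⁅x, y⁆ (zm T')) + (op K ⁅⁅x, ek K k⁆, y⁆ (zm T')
        + op K ⁅x, ⁅y, ek K k⁆⁆ (zm T')) := by rw [eA1, eA2, eA3]; ring
    _ = op K (ek K k) (op K ⁅x, y⁆ (zm T')) + op K ⁅⁅x, y⁆, ek K k⁆ (zm T') := by rw [hjac]

/-- the full commutation relation on monomials -/
lemma LieC : ∀ (n : ℕ) (T : ι →₀ ℕ), T.degree ≤ n → ∀ x y : L, Dlt K x y (zm T) := by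
  intro n
  induction n using Nat.strong_induction_on with
  | _ n ihn =>
  intro T hT x y
  have IH : ∀ τ : ι →₀ ℕ, τ.degree < T.degree → ∀ x y : L, Dlt K x y (zm τ) := by
    intro τ hτ x y
    exact ihn τ.degree (by omega) τ le_rfl x y
  clear ihn hT
  refine Dlt_span_y K ?_ y (mem_top_span K y)
  intro gy hgy
  refine Dlt_span_x K ?_ x (mem_top_span K x)
  intro gx hgx
  rcases hgy with ⟨i, rfl⟩ | hyH
  · -- gy = ek i
    rcases hgx with ⟨j, rfl⟩ | hxH
    · -- pair (ek j, ek i)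
      by_cases hij : i ≤ j
      · by_cases hiT : ∀ l ∈ T.support, i ≤ l
        · exact caseI K T i hiT (ek K j)
            (Submodule.subset_span (Set.mem_union_left _ ⟨j, hij, rfl⟩))
        · push_neg at hiT
          obtain ⟨l, hl, hli⟩ := hiT
          have hne : T.support.Nonempty := ⟨l, hl⟩
          have hki : T.support.min' hne < i := lt_of_le_of_lt (Finset.min'_le _ _ hl) hli
          refine caseII K T hne IH _ ?_ _ ?_
          · exact Submodule.subset_span (Set.mem_union_left _ ⟨j, lt_of_lt_of_le hki hij, rfl⟩)
          · exact Submodule.subset_span (Set.mem_union_left _ ⟨i, hki, rfl⟩)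
      · have hji : j ≤ i := le_of_not_ge hij
        apply Dlt_antisymm
        by_cases hjT : ∀ l ∈ T.support, j ≤ l
        · exact caseI K T j hjT (ek K i)
            (Submodule.subset_span (Set.mem_union_left _ ⟨i, hji, rfl⟩))
        · push_neg at hjT
          obtain ⟨l, hl, hlj⟩ := hjT
          have hne : T.support.Nonempty := ⟨l, hl⟩
          have hkj : T.support.min' hne < j := lt_of_le_of_lt (Finset.min'_le _ _ hl) hlj
          refine caseII K T hne IH _ ?_ _ ?_
          · exact Submodule.subset_span (Set.mem_union_left _ ⟨i, lt_of_lt_of_le hkj hji, rfl⟩)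
          · exact Submodule.subset_span (Set.mem_union_left _ ⟨j, hkj, rfl⟩)
    · -- pair (gx ∈ H, ek i)
      by_cases hiT : ∀ l ∈ T.support, i ≤ l
      · exact caseI K T i hiT gx (Submodule.subset_span (Set.mem_union_right _ hxH))
      · push_neg at hiT
        obtain ⟨l, hl, hli⟩ := hiT
        have hne : T.support.Nonempty := ⟨l, hl⟩
        have hki : T.support.min' hne < i := lt_of_le_of_lt (Finset.min'_le _ _ hl) hli
        refine caseII K T hne IH _ (H_le_spanGt K _ hxH) _ ?_
        exact Submodule.subset_span (Set.mem_union_left _ ⟨i, hki, rfl⟩)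
  · -- gy ∈ H
    rcases hgx with ⟨j, rfl⟩ | hxH
    · -- pair (ek j, gy ∈ H) : use antisymmetry
      apply Dlt_antisymm
      by_cases hjT : ∀ l ∈ T.support, j ≤ l
      · exact caseI K T j hjT gy (Submodule.subset_span (Set.mem_union_right _ hyH))
      · push_neg at hjT
        obtain ⟨l, hl, hlj⟩ := hjT
        have hne : T.support.Nonempty := ⟨l, hl⟩
        have hkj : T.support.min' hne < j := lt_of_le_of_lt (Finset.min'_le _ _ hl) hlj
        refine caseII K T hne IH _ (H_le_spanGt K _ hyH) _ ?_
        exact Submodule.subset_span (Set.mem_union_left _ ⟨j, hkj, rfl⟩)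
    · -- pair (H, H)
      rcases Finset.eq_empty_or_nonempty T.support with hemp | hne
      · have hT0 : T = 0 := by
          rwa [Finsupp.support_eq_empty] at hemp
        subst hT0
        exact caseH0 K gx hxH gy hyH
      · exact caseII K T hne IH _ (H_le_spanGt K _ hxH) _ (H_le_spanGt K _ hyH)

/-- the commutation relation on all polynomials -/
lemma Dlt_all (x y : L) (p : MM ι) : Dlt K x y p := by
  have hp : p ∈ (⊤ : Submodule ℂ (MM ι)) := trivial
  rw [top_le_Fil_span] at hp
  refine Dlt_span_p K ?_ p hp
  rintro q ⟨τ, rfl⟩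
  exact LieC K τ.degree τ le_rfl x y

end LieProp


section Rho

/-- the action as a Lie algebra morphism into endomorphisms -/
def rhoLie : L →ₗ⁅ℂ⁆ Module.End ℂ (MM ι) where
  toFun x := op K x
  map_add' x y := LinearMap.ext fun p => op_add_left K x y p
  map_smul' c x := LinearMap.ext fun p => op_smul_left K c x p
  map_lie' := by
    intro x y
    apply LinearMap.ext
    intro p
    have h := Dlt_all K x y p
    rw [Dlt] at h
    rw [Ring.lie_def]
    simp only [LinearMap.sub_apply, Module.End.mul_apply, LinearMap.coe_mk, AddHom.coe_mk]
    exact h.symm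

lemma rhoLie_apply (x : L) (p : MM ι) : rhoLie K x p = op K x p := rfl

/-- the action of the universal enveloping algebra -/
def rhoU : UniversalEnvelopingAlgebra ℂ L →ₐ[ℂ] Module.End ℂ (MM ι) :=
  UniversalEnvelopingAlgebra.lift ℂ (rhoLie K)

lemma rhoU_iota (x : L) (p : MM ι) :
    rhoU K (UniversalEnvelopingAlgebra.ι ℂ x) p = op K x p := by
  rw [rhoU, UniversalEnvelopingAlgebra.lift_ι_apply]
  rfl

end Rho

section Adjoin

set_option maxHeartbeats 1000000
set_option synthInstance.maxHeartbeats 400000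

variable (L)

/-- the universal enveloping algebra is generated by the image of `ι` -/
lemma adjoin_iota_top :
    Algebra.adjoin ℂ
      (Set.range ((UniversalEnvelopingAlgebra.ι ℂ : L →ₗ⁅ℂ⁆ UniversalEnvelopingAlgebra ℂ L)))
      = ⊤ := by
  set A := Algebra.adjoin ℂ
    (Set.range ((UniversalEnvelopingAlgebra.ι ℂ : L →ₗ⁅ℂ⁆ UniversalEnvelopingAlgebra ℂ L)))
    with hA
  let f : L →ₗ⁅ℂ⁆ A :=
    { toFun := fun x => ⟨UniversalEnvelopingAlgebra.ι ℂ x, Algebra.subset_adjoin ⟨x, rfl⟩⟩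
      map_add' := fun x y => Subtype.ext (by simp)
      map_smul' := fun c x => Subtype.ext (by simp)
      map_lie' := by
        intro x y
        apply Subtype.ext
        have h : (UniversalEnvelopingAlgebra.ι ℂ
            : L →ₗ⁅ℂ⁆ UniversalEnvelopingAlgebra ℂ L) ⁅x, y⁆
            = ⁅UniversalEnvelopingAlgebra.ι ℂ x, UniversalEnvelopingAlgebra.ι ℂ y⁆ :=
          LieHom.map_lie _ _ _
        rw [Ring.lie_def] at h
        simp only [Ring.lie_def]
        simpa using h }
  let g := UniversalEnvelopingAlgebra.lift ℂ f
  have hfx : ∀ x : L, g (UniversalEnvelopingAlgebra.ι ℂ x) = f x := fun x =>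
    UniversalEnvelopingAlgebra.lift_ι_apply ℂ f x
  have hid : A.val.comp g = AlgHom.id ℂ (UniversalEnvelopingAlgebra ℂ L) := by
    apply UniversalEnvelopingAlgebra.hom_ext
    apply LieHom.ext
    intro x
    show A.val (g (UniversalEnvelopingAlgebra.ι ℂ x))
        = UniversalEnvelopingAlgebra.ι ℂ x
    rw [hfx]
    rfl
  rw [eq_top_iff]
  intro u _
  have hu : A.val (g u) = u := by
    rw [show A.val (g u) = (A.val.comp g) u from rfl, hid]
    rfl
  rw [← hu]
  exact (g u).2

end Adjoin

section Spanning

variable [WellFoundedLT ι]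

/-- the commutation rule for the operators -/
lemma op_comm (x y : L) (p : MM ι) :
    op K x (op K y p) = op K y (op K x p) + op K ⁅x, y⁆ p := by
  have h := Dlt_all K x y p
  rw [Dlt] at h
  rw [← h]
  ring

variable (m : MM ι)

/-- the standard family generating the orbit of `m`, defined recursively -/
def mFam : ℕ → (ι →₀ ℕ) → MM ι
  | 0, _ => m
  | (n+1), ν =>
    if hν : ν.degree ≤ n then mFam n ν
    else
      op K (ek K (ν.support.min' (supp_ne hν)))
        (mFam n (ν - Finsupp.single (ν.support.min' (supp_ne hν)) 1))

/-- the standard family generating the orbit of `m` -/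
def mEl (ν : ι →₀ ℕ) : MM ι := mFam K m ν.degree ν

lemma mEl_zero : mEl K m 0 = m := by
  rw [mEl, map_zero]
  rfl

lemma mFam_succ_eq (n : ℕ) (ν : ι →₀ ℕ) (h : ν.degree ≤ n) :
    mFam K m (n+1) ν = mFam K m n ν := by
  rw [mFam, dif_pos h]

lemma mFam_eq_mEl (n : ℕ) (ν : ι →₀ ℕ) (h : ν.degree ≤ n) :
    mFam K m n ν = mEl K m ν := by
  induction n with
  | zero =>
    have h0 : ν.degree = 0 := by omega
    rw [mEl, h0]
  | succ n ih =>
    by_cases h' : ν.degree ≤ n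
    · rw [mFam_succ_eq K m n ν h', ih h']
    · have h1 : ν.degree = n + 1 := by omega
      rw [mEl, h1]

lemma mEl_unfold (ν : ι →₀ ℕ) (hne : ν.support.Nonempty) :
    mEl K m ν = op K (ek K (ν.support.min' hne))
      (mEl K m (ν - Finsupp.single (ν.support.min' hne) 1)) := by
  have hdeg : (ν - Finsupp.single (ν.support.min' hne) 1).degree + 1 = ν.degree :=
    nu_decomp_degree (ν.support.min'_mem hne)
  rw [mEl, show ν.degree = (ν - Finsupp.single (ν.support.min' hne) 1).degree + 1 from hdeg.symm,
    mFam, dif_neg (by omega)]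
  rw [mFam_eq_mEl K m _ _ le_rfl]

lemma mEl_single_add (i : ι) (ν : ι →₀ ℕ) (hle : ∀ l ∈ ν.support, i ≤ l) :
    mEl K m (Finsupp.single i 1 + ν) = op K (ek K i) (mEl K m ν) := by
  have hne : (Finsupp.single i 1 + ν).support.Nonempty := ⟨i, mem_single_add_support ν⟩
  have hmin : (Finsupp.single i 1 + ν).support.min' hne = i :=
    min'_eq_of i hne (mem_single_add_support ν) (supp_single_add hle)
  rw [mEl_unfold K m _ hne, hmin, single_add_sub]

/-- the span of the standard family up to degree `d` -/
def Wd (d : ℕ) : Submodule ℂ (MM ι) :=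
  Submodule.span ℂ {q | ∃ ν : ι →₀ ℕ, ν.degree ≤ d ∧ q = mEl K m ν}

lemma mEl_mem_Wd {d : ℕ} {ν : ι →₀ ℕ} (h : ν.degree ≤ d) : mEl K m ν ∈ Wd K m d :=
  Submodule.subset_span ⟨ν, h, rfl⟩

lemma Wd_mono {d e : ℕ} (h : d ≤ e) : Wd K m d ≤ Wd K m e := by
  apply Submodule.span_le.2
  rintro q ⟨ν, hν, rfl⟩
  exact mEl_mem_Wd K m (le_trans hν h)

/-- extend an operator bound from the generating family to the span -/
lemma opWd {z : L} {d : ℕ} {W' : Submodule ℂ (MM ι)}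
    (h : ∀ ν : ι →₀ ℕ, ν.degree ≤ d → op K z (mEl K m ν) ∈ W') :
    ∀ q ∈ Wd K m d, op K z q ∈ W' := by
  intro q hq
  induction hq using Submodule.span_induction with
  | mem q hq => obtain ⟨ν, hν, rfl⟩ := hq; exact h ν hν
  | zero => rw [map_zero]; exact Submodule.zero_mem _
  | add a c _ _ ha hc => rw [map_add]; exact Submodule.add_mem _ ha hc
  | smul t a _ ha => rw [map_smul]; exact Submodule.smul_mem _ t ha

variable (ψ : L →ₗ[ℂ] ℂ) (hm : ∀ v ∈ K.H, op K v m = ψ v • m)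

include hm in
/-- the main stability result for the spanning family -/
lemma stab : ∀ d : ℕ,
    (∀ i : ι, ∀ ν : ι →₀ ℕ, ν.degree ≤ d → op K (ek K i) (mEl K m ν) ∈ Wd K m (d+1))
    ∧ (∀ v ∈ K.H, ∀ ν : ι →₀ ℕ, ν.degree ≤ d → op K v (mEl K m ν) ∈ Wd K m d) := by
  intro d
  induction d using Nat.strong_induction_on with
  | _ d ihd =>
  -- the combined statement at lower levels
  have hany : ∀ e : ℕ, e < d → ∀ x : L, ∀ ν : ι →₀ ℕ, ν.degree ≤ e →
      op K x (mEl K m ν) ∈ Wd K m (e+1) := by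
    intro e he x ν hν
    have hx : x ∈ Submodule.span ℂ ({x | ∃ j, x = ek K j} ∪ (K.H : Set L)) := mem_top_span K x
    induction hx using Submodule.span_induction with
    | mem v hv =>
      rcases hv with ⟨j, rfl⟩ | hvH
      · exact (ihd e he).1 j ν hν
      · exact Wd_mono K m (by omega) ((ihd e he).2 v hvH ν hν)
    | zero => rw [op_zero_left]; exact Submodule.zero_mem _
    | add a c _ _ ha hc => rw [op_add_left]; exact Submodule.add_mem _ ha hc
    | smul t a _ ha => rw [op_smul_left]; exact Submodule.smul_mem _ t ha
  constructor
  · -- the `e i` part, by well-founded induction on `i`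
    intro i
    induction i using WellFoundedLT.induction with
    | ind i ihi =>
    intro ν hν
    rcases Finset.eq_empty_or_nonempty ν.support with hemp | hne
    · -- ν = 0
      have hν0 : ν = 0 := by rwa [Finsupp.support_eq_empty] at hemp
      subst hν0
      have : op K (ek K i) (mEl K m 0) = mEl K m (Finsupp.single i 1 + 0) := by
        rw [mEl_single_add K m i 0 (by simp)]
      rw [this]
      exact mEl_mem_Wd K m (by rw [add_zero, deg_single]; omega)
    · set k := ν.support.min' hne with hk
      set ν' := ν - Finsupp.single k 1 with hν'
      have hdeg' : ν'.degree + 1 = ν.degree := nu_decomp_degree (ν.support.min'_mem hne)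
      have hd1 : 1 ≤ ν.degree := by omega
      by_cases hik : i ≤ k
      · -- direct : gives a new element of the family
        have hmins : ∀ l ∈ ν.support, i ≤ l := fun l hl =>
          le_trans hik (Finset.min'_le _ _ hl)
        have : op K (ek K i) (mEl K m ν) = mEl K m (Finsupp.single i 1 + ν) := by
          rw [mEl_single_add K m i ν hmins]
        rw [this]
        exact mEl_mem_Wd K m (by rw [deg_add, deg_single]; omega)
      · -- commute past the head variable
        have hki : k < i := lt_of_not_ge hik
        rw [mEl_unfold K m ν hne, ← hk, ← hν']
        rw [op_comm K (ek K i) (ek K k) (mEl K m ν')]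
        apply Submodule.add_mem
        · -- op ek k (op ek i (mEl ν'))
          have hinner : op K (ek K i) (mEl K m ν') ∈ Wd K m ((ν'.degree) + 1) :=
            (ihd ν'.degree (by omega)).1 i ν' le_rfl
          have houter : ∀ q ∈ Wd K m (ν'.degree + 1), op K (ek K k) q ∈ Wd K m (d+1) := by
            apply opWd
            intro τ hτ
            exact Wd_mono K m (by omega) (ihi k hki τ (by omega))
          exact houter _ hinner
        · -- op ⁅ek i, ek k⁆ (mEl ν')
          have := hany ν'.degree (by omega) ⁅ek K i, ek K k⁆ ν' le_rfl
          exact Wd_mono K m (by omega) this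
  · -- the `H` part
    intro v hv ν hν
    rcases Finset.eq_empty_or_nonempty ν.support with hemp | hne
    · have hν0 : ν = 0 := by rwa [Finsupp.support_eq_empty] at hemp
      subst hν0
      have hmem : mEl K m 0 ∈ Wd K m d := mEl_mem_Wd K m (by simp)
      rw [mEl_zero] at hmem ⊢
      rw [hm v hv]
      exact Submodule.smul_mem _ _ hmem
    · set k := ν.support.min' hne with hk
      set ν' := ν - Finsupp.single k 1 with hν'
      have hdeg' : ν'.degree + 1 = ν.degree := nu_decomp_degree (ν.support.min'_mem hne)
      have hd1 : 1 ≤ ν.degree := by omega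
      rw [mEl_unfold K m ν hne, ← hk, ← hν']
      rw [op_comm K v (ek K k) (mEl K m ν')]
      apply Submodule.add_mem
      · have hinner : op K v (mEl K m ν') ∈ Wd K m ν'.degree :=
          (ihd ν'.degree (by omega)).2 v hv ν' le_rfl
        have houter : ∀ q ∈ Wd K m ν'.degree, op K (ek K k) q ∈ Wd K m d := by
          apply opWd
          intro τ hτ
          have := (ihd ν'.degree (by omega)).1 k τ hτ
          exact Wd_mono K m (by omega) this
        exact houter _ hinner
      · have := hany ν'.degree (by omega) ⁅v, ek K k⁆ ν' le_rfl
        exact Wd_mono K m (by omega) this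


/-- the full span of the standard family -/
def Wtot : Submodule ℂ (MM ι) := Submodule.span ℂ (Set.range (mEl K m))

lemma Wd_le_Wtot (d : ℕ) : Wd K m d ≤ Wtot K m := by
  apply Submodule.span_le.2
  rintro q ⟨ν, _, rfl⟩
  exact Submodule.subset_span ⟨ν, rfl⟩

lemma mEl_mem_Wtot (ν : ι →₀ ℕ) : mEl K m ν ∈ Wtot K m :=
  Submodule.subset_span ⟨ν, rfl⟩

include hm in
lemma op_Wtot : ∀ x : L, ∀ q ∈ Wtot K m, op K x q ∈ Wtot K m := by
  intro x q hq
  induction hq using Submodule.span_induction with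
  | mem q hq =>
    obtain ⟨ν, rfl⟩ := hq
    have hx : x ∈ Submodule.span ℂ ({x | ∃ j, x = ek K j} ∪ (K.H : Set L)) := mem_top_span K x
    induction hx using Submodule.span_induction with
    | mem v hv =>
      rcases hv with ⟨j, rfl⟩ | hvH
      · exact Wd_le_Wtot K m _ ((stab K m ψ hm ν.degree).1 j ν le_rfl)
      · exact Wd_le_Wtot K m _ ((stab K m ψ hm ν.degree).2 v hvH ν le_rfl)
    | zero => rw [op_zero_left]; exact Submodule.zero_mem _
    | add a c _ _ ha hc => rw [op_add_left]; exact Submodule.add_mem _ ha hc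
    | smul t a _ ha => rw [op_smul_left]; exact Submodule.smul_mem _ t ha
  | zero => rw [map_zero]; exact Submodule.zero_mem _
  | add a c _ _ ha hc => rw [map_add]; exact Submodule.add_mem _ ha hc
  | smul t a _ ha => rw [map_smul]; exact Submodule.smul_mem _ t ha

include hm in
lemma rhoU_Wtot : ∀ u : UniversalEnvelopingAlgebra ℂ L, ∀ q ∈ Wtot K m,
    rhoU K u q ∈ Wtot K m := by
  let SA : Subalgebra ℂ (UniversalEnvelopingAlgebra ℂ L) :=
    { carrier := {u | ∀ q ∈ Wtot K m, rhoU K u q ∈ Wtot K m}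
      one_mem' := by
        intro q hq
        rw [map_one]
        exact hq
      mul_mem' := by
        intro a b ha hb q hq
        rw [map_mul]
        exact ha _ (hb q hq)
      zero_mem' := by
        intro q hq
        rw [map_zero]
        exact Submodule.zero_mem _
      add_mem' := by
        intro a b ha hb q hq
        rw [map_add]
        exact Submodule.add_mem _ (ha q hq) (hb q hq)
      algebraMap_mem' := by
        intro r q hq
        rw [AlgHom.commutes, Module.algebraMap_end_apply]
        exact Submodule.smul_mem _ r hq }
  intro u
  have hu : u ∈ SA := by
    have htop : u ∈ (⊤ : Subalgebra ℂ (UniversalEnvelopingAlgebra ℂ L)) := trivial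
    rw [← adjoin_iota_top L] at htop
    refine Algebra.adjoin_le ?_ htop
    rintro w ⟨x, rfl⟩
    intro q hq
    rw [rhoU_iota]
    exact op_Wtot K m ψ hm x q hq
  exact hu

-- filtration facts for the final argument
lemma mem_Fil_totalDegree (p : MM ι) : p ∈ (Fil p.totalDegree : Submodule ℂ (MM ι)) := by
  set N := p.totalDegree with hN
  rw [MvPolynomial.as_sum p]
  apply Submodule.sum_mem
  intro τ hτ
  have hmono : (MvPolynomial.monomial τ) (MvPolynomial.coeff τ p)
      = (MvPolynomial.coeff τ p) • zm τ := by
    rw [zm, MvPolynomial.smul_monomial, smul_eq_mul, mul_one]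
  rw [hmono]
  refine Submodule.smul_mem _ _ (zm_mem_Fil ?_)
  rw [hN]
  exact MvPolynomial.le_totalDegree hτ

lemma Fil_zero_eq {q : MM ι} (hq : q ∈ (Fil 0 : Submodule ℂ (MM ι))) :
    ∃ a : ℂ, q = a • (1 : MM ι) := by
  induction hq using Submodule.span_induction with
  | mem p hp =>
    obtain ⟨τ, hτ, rfl⟩ := hp
    have hτ0 : τ = 0 := by
      rw [← Finsupp.degree_eq_zero_iff]
      omega
    subst hτ0
    exact ⟨1, by rw [zm_zero, one_smul]⟩
  | zero => exact ⟨0, by rw [zero_smul]⟩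
  | add a c _ _ ha hc =>
    obtain ⟨r, rfl⟩ := ha; obtain ⟨t, rfl⟩ := hc
    exact ⟨r + t, by rw [add_smul]⟩
  | smul t a _ ha =>
    obtain ⟨r, rfl⟩ := ha
    exact ⟨t * r, by rw [smul_smul]⟩

lemma homog_monomial (N : ℕ) (τ : ι →₀ ℕ) (c : ℂ) :
    MvPolynomial.homogeneousComponent N (MvPolynomial.monomial τ c : MM ι)
      = if τ.degree = N then MvPolynomial.monomial τ c else 0 := by
  ext d
  rw [MvPolynomial.coeff_homogeneousComponent]
  by_cases h : τ.degree = N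
  · rw [if_pos h]
    by_cases hd : d.degree = N
    · rw [if_pos hd]
    · rw [if_neg hd]
      rw [MvPolynomial.coeff_monomial]
      split
      · next heq => exfalso; apply hd; rw [← heq]; exact h
      · rfl
  · rw [if_neg h, MvPolynomial.coeff_zero]
    by_cases hd : d.degree = N
    · rw [if_pos hd, MvPolynomial.coeff_monomial]
      split
      · next heq => exfalso; apply h; rw [heq]; exact hd
      · rfl
    · rw [if_neg hd]

lemma homog_vanish {e N : ℕ} (h : e < N) {q : MM ι}
    (hq : q ∈ (Fil e : Submodule ℂ (MM ι))) :
    MvPolynomial.homogeneousComponent N q = 0 := by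
  induction hq using Submodule.span_induction with
  | mem p hp =>
    obtain ⟨τ, hτ, rfl⟩ := hp
    rw [zm, homog_monomial, if_neg (by omega)]
  | zero => rw [map_zero]
  | add a c _ _ ha hc => rw [map_add, ha, hc, add_zero]
  | smul t a _ ha => rw [map_smul, ha, smul_zero]

lemma homog_zm_mul (ν : ι →₀ ℕ) (p : MM ι) (N : ℕ) :
    MvPolynomial.homogeneousComponent (ν.degree + N) (zm ν * p)
      = zm ν * MvPolynomial.homogeneousComponent N p := by
  conv_lhs => rw [MvPolynomial.as_sum p]
  conv_rhs => rw [MvPolynomial.as_sum p]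
  rw [Finset.mul_sum, map_sum, map_sum, Finset.mul_sum]
  apply Finset.sum_congr rfl
  intro τ _
  rw [show zm ν * (MvPolynomial.monomial τ) (MvPolynomial.coeff τ p)
      = MvPolynomial.monomial (ν + τ) (MvPolynomial.coeff τ p) from by
    rw [zm, MvPolynomial.monomial_mul, one_mul]]
  rw [homog_monomial, homog_monomial]
  by_cases h : τ.degree = N
  · rw [if_pos h, if_pos (by rw [deg_add]; omega)]
    rw [zm, MvPolynomial.monomial_mul, one_mul]
  · rw [if_neg h, if_neg (by rw [deg_add]; omega), mul_zero]

lemma opek_sub {k : ι} {e : ℕ} {p : MM ι} (hp : p ∈ (Fil e : Submodule ℂ (MM ι))) :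
    op K (ek K k) p - (X k : MM ι) * p ∈ (Fil e : Submodule ℂ (MM ι)) := by
  induction hp using Submodule.span_induction with
  | mem q hq =>
    obtain ⟨τ, hτ, rfl⟩ := hq
    rw [op_zm]
    have h1 := Gd_sub_mem K τ.degree τ le_rfl (ek K k)
    rw [xi_ek] at h1
    exact Fil_mono hτ h1
  | zero => rw [map_zero, mul_zero, sub_zero]; exact Submodule.zero_mem _
  | add a c _ _ ha hc =>
    rw [map_add, mul_add]
    have : op K (ek K k) a + op K (ek K k) c - ((X k : MM ι) * a + (X k : MM ι) * c)
        = (op K (ek K k) a - (X k : MM ι) * a) + (op K (ek K k) c - (X k : MM ι) * c) := by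
      ring
    rw [this]
    exact Submodule.add_mem _ ha hc
  | smul t a _ ha =>
    rw [map_smul, mul_smul_comm]
    have : t • op K (ek K k) a - t • ((X k : MM ι) * a)
        = t • (op K (ek K k) a - (X k : MM ι) * a) := by
      rw [smul_sub]
    rw [this]
    exact Submodule.smul_mem _ t ha

/-- top-term structure of the standard family -/
lemma mEl_top : ∀ (n : ℕ) (ν : ι →₀ ℕ), ν.degree ≤ n →
    mEl K m ν - zm ν * m ∈ (Fil (m.totalDegree + ν.degree - 1) : Submodule ℂ (MM ι)) := by
  intro n
  induction n with
  | zero =>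
    intro ν hν
    have hν0 : ν = 0 := by rw [← Finsupp.degree_eq_zero_iff]; omega
    subst hν0
    rw [mEl_zero, zm_zero, one_mul, sub_self]
    exact Submodule.zero_mem _
  | succ n ih =>
    intro ν hν
    by_cases h' : ν.degree ≤ n
    · exact ih ν h'
    · have hne : ν.support.Nonempty := supp_ne h'
      set k := ν.support.min' hne with hk
      set ν' := ν - Finsupp.single k 1 with hν'
      have hdeg' : ν'.degree + 1 = ν.degree := nu_decomp_degree (ν.support.min'_mem hne)
      have hd2 : Finsupp.single k 1 + ν' = ν := by
        rw [hν']
        exact nu_decomp (ν.support.min'_mem hne)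
      rw [mEl_unfold K m ν hne, ← hk, ← hν']
      have hsplit : mEl K m ν' = zm ν' * m + (mEl K m ν' - zm ν' * m) := by ring
      rw [hsplit, map_add]
      have h1 : op K (ek K k) (zm ν' * m) - (X k : MM ι) * (zm ν' * m)
          ∈ (Fil (ν'.degree + m.totalDegree) : Submodule ℂ (MM ι)) :=
        opek_sub K (mul_Fil_mem (zm_mem_Fil le_rfl) (mem_Fil_totalDegree m))
      have hXk : (X k : MM ι) * (zm ν' * m) = zm ν * m := by
        rw [← mul_assoc, X_mul_zm, hd2]
      have h2 : op K (ek K k) (mEl K m ν' - zm ν' * m)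
          ∈ (Fil (m.totalDegree + ν.degree - 1) : Submodule ℂ (MM ι)) := by
        by_cases hz : ν'.degree = 0
        · have hz0 : ν' = 0 := by rw [← Finsupp.degree_eq_zero_iff]; omega
          rw [hz0, mEl_zero, zm_zero, one_mul, sub_self, map_zero]
          exact Submodule.zero_mem _
        · have hr := ih ν' (by omega)
          have hop := op_mem_Fil K (ek K k) hr
          refine Fil_mono ?_ hop
          omega
      have hgoal : op K (ek K k) (zm ν' * m) + op K (ek K k) (mEl K m ν' - zm ν' * m)
          - zm ν * m
          = (op K (ek K k) (zm ν' * m) - (X k : MM ι) * (zm ν' * m))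
            + op K (ek K k) (mEl K m ν' - zm ν' * m) := by
        rw [hXk]
        ring
      rw [hgoal]
      apply Submodule.add_mem
      · exact Fil_mono (by omega) h1
      · exact h2

lemma homog_top_ne_zero (hm0 : m ≠ 0) :
    MvPolynomial.homogeneousComponent m.totalDegree m ≠ 0 := by
  have hsupp : m.support.Nonempty := by
    rwa [MvPolynomial.support_nonempty]
  obtain ⟨τ, hτ, hdeg⟩ := Finset.exists_mem_eq_sup m.support hsupp
    (fun s => s.sum fun _ e => e)
  intro hcon
  have hc : MvPolynomial.coeff τ (MvPolynomial.homogeneousComponent m.totalDegree m)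
      = MvPolynomial.coeff τ m := by
    rw [MvPolynomial.coeff_homogeneousComponent, if_pos]
    show τ.degree = m.totalDegree
    rw [MvPolynomial.totalDegree, hdeg]
    rfl
  rw [hcon, MvPolynomial.coeff_zero] at hc
  exact (MvPolynomial.mem_support_iff.1 hτ) hc.symm

include hm in
/-- the key theorem : if some element of the enveloping algebra maps `m` to `1`, and `m` is a
common eigenvector for `H` with character `ψ`, then `ψ` agrees with `χ` on `H`. -/
theorem key (hgen : ∃ u : UniversalEnvelopingAlgebra ℂ L, rhoU K u m = (1 : MM ι)) :
    ∀ v ∈ K.H, ψ v = K.chi v := by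
  obtain ⟨u, hu⟩ := hgen
  have hm0 : m ≠ 0 := by
    intro h
    rw [h, map_zero] at hu
    exact one_ne_zero hu.symm
  have hmW : m ∈ Wtot K m := by
    have := mEl_mem_Wtot K m 0
    rwa [mEl_zero] at this
  have h1W : (1 : MM ι) ∈ Wtot K m := by
    rw [← hu]
    exact rhoU_Wtot K m ψ hm u m hmW
  rw [Wtot, Finsupp.mem_span_range_iff_exists_finsupp] at h1W
  obtain ⟨c, hc⟩ := h1W
  set n := m.totalDegree with hn
  set t := MvPolynomial.homogeneousComponent n m with ht
  have htne : t ≠ 0 := homog_top_ne_zero m hm0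
  have hcne : c ≠ 0 := by
    intro h
    rw [h, Finsupp.sum_zero_index] at hc
    exact (one_ne_zero : (1 : MM ι) ≠ 0) hc.symm
  have hsne : c.support.Nonempty := Finsupp.support_nonempty_iff.2 hcne
  have hDne : (c.support.image Finsupp.degree).Nonempty := hsne.image _
  set d := (c.support.image Finsupp.degree).max' hDne with hd
  obtain ⟨ν₀, hν₀s, hν₀d⟩ : ∃ ν₀ ∈ c.support, ν₀.degree = d := by
    have hmem := (c.support.image Finsupp.degree).max'_mem hDne
    rw [Finset.mem_image] at hmem
    obtain ⟨ν₀, h1, h2⟩ := hmem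
    exact ⟨ν₀, h1, h2⟩
  have hdle : ∀ ν ∈ c.support, ν.degree ≤ d := fun ν hν =>
    Finset.le_max' _ _ (Finset.mem_image_of_mem _ hν)
  have hnd : n + d = 0 := by
    by_contra hcon
    have hnd1 : 1 ≤ n + d := by omega
    have h0 : MvPolynomial.homogeneousComponent (n + d) (1 : MM ι) = 0 := by
      apply MvPolynomial.homogeneousComponent_eq_zero
      rw [MvPolynomial.totalDegree_one]
      omega
    have heval : ∀ ν ∈ c.support,
        MvPolynomial.homogeneousComponent (n + d) (mEl K m ν)
          = if ν.degree = d then zm ν * t else 0 := by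
      intro ν hνs
      have hsplit : mEl K m ν = zm ν * m + (mEl K m ν - zm ν * m) := by ring
      rw [hsplit, map_add]
      have hr : MvPolynomial.homogeneousComponent (n + d) (mEl K m ν - zm ν * m) = 0 := by
        apply homog_vanish (e := n + ν.degree - 1) (by have := hdle ν hνs; omega)
        exact mEl_top K m ν.degree ν le_rfl
      rw [hr, add_zero]
      by_cases hdd : ν.degree = d
      · rw [if_pos hdd]
        have heq : n + d = ν.degree + n := by omega
        rw [heq, homog_zm_mul]
      · rw [if_neg hdd]
        apply homog_vanish (e := ν.degree + n) (by have := hdle ν hνs; omega)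
        exact mul_Fil_mem (zm_mem_Fil le_rfl) (mem_Fil_totalDegree m)
    have hsum : (∑ ν ∈ c.support, c ν • (if ν.degree = d then zm ν * t else 0))
        = (0 : MM ι) := by
      have h1 := congrArg (MvPolynomial.homogeneousComponent (n + d)) hc
      rw [h0, map_finsuppSum, Finsupp.sum] at h1
      calc (∑ ν ∈ c.support, c ν • (if ν.degree = d then zm ν * t else 0))
          = ∑ ν ∈ c.support, MvPolynomial.homogeneousComponent (n + d) (c ν • mEl K m ν) :=
            Finset.sum_congr rfl (fun ν hνs => by rw [map_smul, heval ν hνs])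
        _ = 0 := h1
    have hsum3 : (∑ ν ∈ c.support.filter (fun ν => ν.degree = d), c ν • zm ν) * t
        = (0 : MM ι) := by
      calc (∑ ν ∈ c.support.filter (fun ν => ν.degree = d), c ν • zm ν) * t
          = ∑ ν ∈ c.support.filter (fun ν => ν.degree = d), c ν • zm ν * t := by
            rw [Finset.sum_mul]
        _ = ∑ ν ∈ c.support, (if ν.degree = d then c ν • zm ν * t else 0) :=
            Finset.sum_filter _ _
        _ = ∑ ν ∈ c.support, c ν • (if ν.degree = d then zm ν * t else 0) := by
            apply Finset.sum_congr rfl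
            intro ν _
            by_cases hdd : ν.degree = d
            · rw [if_pos hdd, if_pos hdd, smul_mul_assoc]
            · rw [if_neg hdd, if_neg hdd, smul_zero]
        _ = 0 := hsum
    rcases mul_eq_zero.mp hsum3 with hs0 | ht0
    · have hcoeff := congrArg (MvPolynomial.coeff ν₀) hs0
      rw [MvPolynomial.coeff_zero, MvPolynomial.coeff_sum] at hcoeff
      have hone : (∑ ν ∈ c.support.filter (fun ν => ν.degree = d),
          MvPolynomial.coeff ν₀ (c ν • zm ν)) = c ν₀ := by
        rw [Finset.sum_eq_single ν₀]
        · rw [MvPolynomial.coeff_smul, zm, MvPolynomial.coeff_monomial, if_pos rfl,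
            smul_eq_mul, mul_one]
        · intro ν _ hne
          rw [MvPolynomial.coeff_smul, zm, MvPolynomial.coeff_monomial, if_neg hne, smul_zero]
        · intro habs
          exfalso
          apply habs
          rw [Finset.mem_filter]
          exact ⟨hν₀s, hν₀d⟩
      rw [hone] at hcoeff
      exact (Finsupp.mem_support_iff.1 hν₀s) hcoeff
    · exact htne ht0
  have hn0 : n = 0 := by omega
  have hmFil : m ∈ (Fil 0 : Submodule ℂ (MM ι)) := by
    have h1 := mem_Fil_totalDegree m
    rwa [← hn, hn0] at h1
  obtain ⟨a, ham⟩ := Fil_zero_eq hmFil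
  have ha0 : a ≠ 0 := by
    intro h
    rw [h, zero_smul] at ham
    exact hm0 ham
  intro v hv
  have hop := hm v hv
  rw [ham] at hop
  have hLHS : op K v (a • (1 : MM ι)) = a • (K.chi v • (1 : MM ι)) := by
    rw [map_smul, show (1 : MM ι) = zm 0 from zm_zero.symm, op_zm, Gd_zero, Gbase_apply,
      xi_mem_H K hv, add_zero, zm_zero]
  rw [hLHS] at hop
  have hco := congrArg (MvPolynomial.coeff 0) hop
  simp only [MvPolynomial.coeff_smul, MvPolynomial.coeff_one, smul_eq_mul, if_true,
    mul_one] at hco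
  apply mul_left_cancel₀ ha0
  rw [mul_comm a (ψ v)]
  exact hco.symm

end Spanning

end Construction

section SpanHelpers

lemma span_bracket {G : Set L} (h : ∀ a ∈ G, ∀ b ∈ G, ⁅a, b⁆ ∈ Submodule.span ℂ G) :
    ∀ x ∈ Submodule.span ℂ G, ∀ y ∈ Submodule.span ℂ G, ⁅x, y⁆ ∈ Submodule.span ℂ G := by
  intro x hx
  induction hx using Submodule.span_induction with
  | mem a ha =>
    intro y hy
    induction hy using Submodule.span_induction with
    | mem b hb => exact h a ha b hb
    | zero => rw [lie_zero]; exact Submodule.zero_mem _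
    | add u v _ _ hu hv => rw [lie_add]; exact Submodule.add_mem _ hu hv
    | smul t u _ hu => rw [lie_smul]; exact Submodule.smul_mem _ t hu
  | zero => intro y hy; rw [zero_lie]; exact Submodule.zero_mem _
  | add u v _ _ hu hv =>
    intro y hy
    rw [add_lie]
    exact Submodule.add_mem _ (hu y hy) (hv y hy)
  | smul t u _ hu =>
    intro y hy
    rw [smul_lie]
    exact Submodule.smul_mem _ t (hu y hy)

lemma span_br_zero {G : Set L} {ψ : L →ₗ[ℂ] ℂ} (h : ∀ a ∈ G, ∀ b ∈ G, ψ ⁅a, b⁆ = 0) :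
    ∀ x ∈ Submodule.span ℂ G, ∀ y ∈ Submodule.span ℂ G, ψ ⁅x, y⁆ = 0 := by
  intro x hx
  induction hx using Submodule.span_induction with
  | mem a ha =>
    intro y hy
    induction hy using Submodule.span_induction with
    | mem b hb => exact h a ha b hb
    | zero => rw [lie_zero, map_zero]
    | add u v _ _ hu hv => rw [lie_add, map_add, hu, hv, add_zero]
    | smul t u _ hu => rw [lie_smul, map_smul, hu, smul_zero]
  | zero => intro y hy; rw [zero_lie, map_zero]
  | add u v _ _ hu hv =>
    intro y hy
    rw [add_lie, map_add, hu y hy, hv y hy, add_zero]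
  | smul t u _ hu =>
    intro y hy
    rw [smul_lie, map_smul, hu y hy, smul_zero]

end SpanHelpers

end Stmt17

set_option maxHeartbeats 1000000 in
/-- For two characters `φ', φ''` of the Whittaker annihilator `𝔤^φ` extending `φ`
(realized as functionals `ψ₁, ψ₂` on `𝔤` vanishing on brackets of `𝔤^φ` and
restricting to `φ` on `𝔭`), the induced modules `V(φ') = U(𝔤) ⊗_{U(𝔤^φ)} ℂ_{φ'}`
(realized as quotients of `U(𝔤)` by the left ideals generated by `y - φ'(y)`,
`y ∈ 𝔤^φ`) are isomorphic iff `φ' = φ''` on `𝔤^φ`. -/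
theorem stmt17 {L : Type*} [LieRing L] [LieAlgebra ℂ L] (𝔭 : LieIdeal ℂ L)
    (φ : 𝔭 →ₗ[ℂ] ℂ)
    (hφ : ∀ p q : 𝔭, φ ⟨⁅(p : L), (q : L)⁆, 𝔭.lie_mem q.2⟩ = 0)
    (G : Set L) (hG : G = {g : L | ∀ p : 𝔭, φ ⟨⁅g, (p : L)⁆, 𝔭.lie_mem p.2⟩ = 0})
    (ψ₁ ψ₂ : L →ₗ[ℂ] ℂ)
    (hψ₁br : ∀ a ∈ G, ∀ b ∈ G, ψ₁ ⁅a, b⁆ = 0)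
    (hψ₂br : ∀ a ∈ G, ∀ b ∈ G, ψ₂ ⁅a, b⁆ = 0)
    (hψ₁ext : ∀ p : 𝔭, ψ₁ (p : L) = φ p)
    (hψ₂ext : ∀ p : 𝔭, ψ₂ (p : L) = φ p)
    (J₁ J₂ : Submodule (UniversalEnvelopingAlgebra ℂ L) (UniversalEnvelopingAlgebra ℂ L))
    (hJ₁ : J₁ = Submodule.span (UniversalEnvelopingAlgebra ℂ L)
      {u | ∃ g ∈ G, u = ι ℂ g - algebraMap ℂ (UniversalEnvelopingAlgebra ℂ L) (ψ₁ g)})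
    (hJ₂ : J₂ = Submodule.span (UniversalEnvelopingAlgebra ℂ L)
      {u | ∃ g ∈ G, u = ι ℂ g - algebraMap ℂ (UniversalEnvelopingAlgebra ℂ L) (ψ₂ g)}) :
    Nonempty ((UniversalEnvelopingAlgebra ℂ L ⧸ J₁) ≃ₗ[UniversalEnvelopingAlgebra ℂ L]
        (UniversalEnvelopingAlgebra ℂ L ⧸ J₂)) ↔
      ∀ g ∈ G, ψ₁ g = ψ₂ g := by
  classical
  constructor
  · rintro ⟨f⟩ g hg
    -- `G` is closed under brackets
    have hGbr : ∀ a ∈ G, ∀ b ∈ G, (⁅a, b⁆ : L) ∈ G := by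
      intro a ha b hb
      rw [hG] at ha hb ⊢
      simp only [Set.mem_setOf_eq] at ha hb ⊢
      intro p
      have hmem1 : (⁅b, (p : L)⁆ : L) ∈ 𝔭 := 𝔭.lie_mem p.2
      have hmem2 : (⁅a, (p : L)⁆ : L) ∈ 𝔭 := 𝔭.lie_mem p.2
      have h1 : φ (⟨⁅a, ⁅b, (p : L)⁆⁆, 𝔭.lie_mem hmem1⟩ : 𝔭) = 0 := ha ⟨⁅b, (p : L)⁆, hmem1⟩
      have h2 : φ (⟨⁅b, ⁅a, (p : L)⁆⁆, 𝔭.lie_mem hmem2⟩ : 𝔭) = 0 := hb ⟨⁅a, (p : L)⁆, hmem2⟩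
      have hsub : (⟨⁅⁅a, b⁆, (p : L)⁆, 𝔭.lie_mem p.2⟩ : 𝔭)
          = ⟨⁅a, ⁅b, (p : L)⁆⁆, 𝔭.lie_mem hmem1⟩ - ⟨⁅b, ⁅a, (p : L)⁆⁆, 𝔭.lie_mem hmem2⟩ := by
        apply Subtype.ext
        simp only [AddSubgroupClass.coe_sub]
        exact lie_lie a b (p : L)
      rw [hsub, map_sub, h1, h2, sub_zero]
    set H := Submodule.span ℂ G with hH
    have hGH : G ⊆ (H : Set L) := Submodule.subset_span
    have hHbr : ∀ x ∈ H, ∀ y ∈ H, (⁅x, y⁆ : L) ∈ H :=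
      Stmt17.span_bracket (fun a ha b hb => Submodule.subset_span (hGbr a ha b hb))
    have hψ₂H : ∀ x ∈ H, ∀ y ∈ H, ψ₂ ⁅x, y⁆ = 0 := Stmt17.span_br_zero hψ₂br
    obtain ⟨C, hHC⟩ := Submodule.exists_isCompl H
    obtain ⟨lo, wf⟩ := exists_wellOrder (Module.Basis.ofVectorSpaceIndex ℂ C)
    letI := lo
    haveI := wf
    set χ : L →ₗ[ℂ] ℂ := ψ₂.comp (H.subtype.comp (H.projectionOnto C hHC)) with hχ
    have hχH : ∀ v ∈ H, χ v = ψ₂ v := by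
      intro v hv
      rw [hχ]
      simp only [LinearMap.coe_comp, Function.comp_apply, Submodule.coe_subtype]
      congr 1
      rw [show v = ((⟨v, hv⟩ : H) : L) from rfl,
        Submodule.projectionOnto_apply_left hHC ⟨v, hv⟩]
    have hχC : ∀ c ∈ C, χ c = 0 := by
      intro c hc
      rw [hχ]
      simp only [LinearMap.coe_comp, Function.comp_apply, Submodule.coe_subtype]
      rw [Submodule.projectionOnto_apply_of_mem_right hHC hc]
      simp
    have hχbr : ∀ x ∈ H, ∀ y ∈ H, χ ⁅x, y⁆ = 0 := by
      intro x hx y hy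
      rw [hχH _ (hHbr x hx y hy)]
      exact hψ₂H x hx y hy
    set K : Stmt17.Ctx L (Module.Basis.ofVectorSpaceIndex ℂ C) :=
      ⟨H, C, hHC, Module.Basis.ofVectorSpace ℂ C, χ, hHbr, hχC, hχbr⟩ with hK
    -- quotient bookkeeping
    obtain ⟨u₀, hu₀⟩ := Submodule.Quotient.mk_surjective J₂ (f (Submodule.Quotient.mk 1))
    obtain ⟨y, hy⟩ := f.surjective (Submodule.Quotient.mk 1)
    obtain ⟨w, hw⟩ := Submodule.Quotient.mk_surjective J₁ y
    have hwu : w * u₀ - 1 ∈ J₂ := by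
      rw [← Submodule.Quotient.eq J₂]
      calc (Submodule.Quotient.mk (w * u₀) : _ ⧸ J₂)
          = w • Submodule.Quotient.mk u₀ := by
            rw [← Submodule.Quotient.mk_smul, smul_eq_mul]
        _ = w • f (Submodule.Quotient.mk 1) := by rw [hu₀]
        _ = f (w • Submodule.Quotient.mk 1) := (map_smul f w _).symm
        _ = f (Submodule.Quotient.mk w) := by
            rw [← Submodule.Quotient.mk_smul, smul_eq_mul, mul_one]
        _ = f y := by rw [hw]
        _ = Submodule.Quotient.mk 1 := hy
    have hgJ : ∀ gg ∈ G,
        ((ι ℂ gg : UniversalEnvelopingAlgebra ℂ L)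
          - algebraMap ℂ (UniversalEnvelopingAlgebra ℂ L) (ψ₁ gg)) * u₀ ∈ J₂ := by
      intro gg hgg
      have hmem : (ι ℂ gg : UniversalEnvelopingAlgebra ℂ L)
          - algebraMap ℂ (UniversalEnvelopingAlgebra ℂ L) (ψ₁ gg) ∈ J₁ := by
        rw [hJ₁]
        exact Submodule.subset_span ⟨gg, hgg, rfl⟩
      have hz : (Submodule.Quotient.mk (((ι ℂ gg : UniversalEnvelopingAlgebra ℂ L)
          - algebraMap ℂ (UniversalEnvelopingAlgebra ℂ L) (ψ₁ gg)) * u₀) : _ ⧸ J₂) = 0 := by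
        calc (Submodule.Quotient.mk (((ι ℂ gg : UniversalEnvelopingAlgebra ℂ L)
            - algebraMap ℂ (UniversalEnvelopingAlgebra ℂ L) (ψ₁ gg)) * u₀) : _ ⧸ J₂)
            = ((ι ℂ gg : UniversalEnvelopingAlgebra ℂ L)
                - algebraMap ℂ (UniversalEnvelopingAlgebra ℂ L) (ψ₁ gg))
              • Submodule.Quotient.mk u₀ := by
              rw [← Submodule.Quotient.mk_smul, smul_eq_mul]
          _ = ((ι ℂ gg : UniversalEnvelopingAlgebra ℂ L)
                - algebraMap ℂ (UniversalEnvelopingAlgebra ℂ L) (ψ₁ gg))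
              • f (Submodule.Quotient.mk 1) := by rw [hu₀]
          _ = f (((ι ℂ gg : UniversalEnvelopingAlgebra ℂ L)
                - algebraMap ℂ (UniversalEnvelopingAlgebra ℂ L) (ψ₁ gg))
              • Submodule.Quotient.mk 1) := (map_smul f _ _).symm
          _ = f (Submodule.Quotient.mk ((ι ℂ gg : UniversalEnvelopingAlgebra ℂ L)
                - algebraMap ℂ (UniversalEnvelopingAlgebra ℂ L) (ψ₁ gg))) := by
              rw [← Submodule.Quotient.mk_smul, smul_eq_mul, mul_one]
          _ = f 0 := by
              rw [show (Submodule.Quotient.mk ((ι ℂ gg : UniversalEnvelopingAlgebra ℂ L)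
                - algebraMap ℂ (UniversalEnvelopingAlgebra ℂ L) (ψ₁ gg)) : _ ⧸ J₁) = 0 from
                (Submodule.Quotient.mk_eq_zero J₁).2 hmem]
          _ = 0 := map_zero f
      rwa [Submodule.Quotient.mk_eq_zero] at hz
    -- action of J₂ kills the vacuum
    have hJ₂act : ∀ j ∈ J₂, Stmt17.rhoU K j (1 : Stmt17.MM (Module.Basis.ofVectorSpaceIndex ℂ C)) = 0 := by
      intro j hj
      rw [hJ₂] at hj
      induction hj using Submodule.span_induction with
      | mem u hu =>
        obtain ⟨gg, hgg, rfl⟩ := hu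
        rw [map_sub, LinearMap.sub_apply, Stmt17.rhoU_iota, AlgHom.commutes,
          Module.algebraMap_end_apply]
        rw [show (1 : Stmt17.MM (Module.Basis.ofVectorSpaceIndex ℂ C)) = Stmt17.zm 0 from
          Stmt17.zm_zero.symm, Stmt17.op_zm, Stmt17.Gd_zero, Stmt17.Gbase_apply]
        rw [Stmt17.xi_mem_H K (hGH hgg), add_zero]
        rw [show K.chi gg = ψ₂ gg from hχH gg (hGH hgg)]
        rw [Stmt17.zm_zero]
        rw [sub_self]
      | zero => rw [map_zero]; rfl
      | add a b _ _ ha hb => rw [map_add, LinearMap.add_apply, ha, hb, add_zero]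
      | smul r a _ ha => rw [smul_eq_mul, map_mul, Module.End.mul_apply, ha, map_zero]
    set m := Stmt17.rhoU K u₀ (1 : Stmt17.MM (Module.Basis.ofVectorSpaceIndex ℂ C)) with hm_def
    have hop : ∀ v ∈ H, Stmt17.op K v m = ψ₁ v • m := by
      have hGv : ∀ gg ∈ G, Stmt17.op K gg m = ψ₁ gg • m := by
        intro gg hgg
        have h0 := hJ₂act _ (hgJ gg hgg)
        rw [map_mul, Module.End.mul_apply, map_sub, LinearMap.sub_apply, Stmt17.rhoU_iota,
          AlgHom.commutes, Module.algebraMap_end_apply] at h0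
        rw [sub_eq_zero] at h0
        exact h0
      intro v hv
      induction hv using Submodule.span_induction with
      | mem a ha => exact hGv a ha
      | zero => rw [Stmt17.op_zero_left, map_zero, zero_smul]
      | add a b _ _ ha hb => rw [Stmt17.op_add_left, ha, hb, map_add, add_smul]
      | smul t a _ ha =>
        rw [Stmt17.op_smul_left, ha, map_smul, smul_smul, smul_eq_mul]
    have hgen : ∃ u : UniversalEnvelopingAlgebra ℂ L,
        Stmt17.rhoU K u m = (1 : Stmt17.MM (Module.Basis.ofVectorSpaceIndex ℂ C)) := by
      refine ⟨w, ?_⟩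
      have hW : Stmt17.rhoU K w m = Stmt17.rhoU K (w * u₀) 1 := by
        rw [map_mul, Module.End.mul_apply, hm_def]
      rw [hW, show (w * u₀ : UniversalEnvelopingAlgebra ℂ L) = 1 + (w * u₀ - 1) from by abel,
        map_add, LinearMap.add_apply, hJ₂act _ hwu, add_zero, map_one (Stmt17.rhoU K),
        Module.End.one_apply]
    have hkey := Stmt17.key K m ψ₁ hop hgen
    rw [hkey g (hGH hg)]
    exact hχH g (hGH hg)
  · intro h
    have hset : {u | ∃ g ∈ G, u = ι ℂ g - algebraMap ℂ (UniversalEnvelopingAlgebra ℂ L) (ψ₁ g)}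
        = {u | ∃ g ∈ G, u = ι ℂ g - algebraMap ℂ (UniversalEnvelopingAlgebra ℂ L) (ψ₂ g)} := by
      ext u
      constructor
      · rintro ⟨g, hg, rfl⟩
        exact ⟨g, hg, by rw [h g hg]⟩
      · rintro ⟨g, hg, rfl⟩
        exact ⟨g, hg, by rw [h g hg]⟩
    exact ⟨Submodule.quotEquivOfEq J₁ J₂ (by rw [hJ₁, hJ₂, hset])⟩
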